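/- arXiv:2204.04011 — 16 statements merged into one kernel-verified Lean document; each statement's English description precedes it below -/
import Mathlib

section
/- Let h : ℤ → ℕ satisfy h(n) = 1 for all n ≤ 1 and h(n) = h(n - h(n-1)) + h(n-2) for all n ≥ 2. Then for all natural numbers n, h(2n+1) = n+1 and h(2n+2) = h(2n) + h(n+1). -/
/-- For `h : ℤ → ℕ` with `h n = 1` for `n ≤ 1` and
`h n = h (n - h (n-1)) + h (n-2)` for `n ≥ 2`, we have `h (2n+1) = n+1` and
`h (2n+2) = h (2n) + h (n+1)` for all natural `n`. -/
theorem stmt0 (h : ℤ → ℕ)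
    (hinit : ∀ n : ℤ, n ≤ 1 → h n = 1)
    (hrec : ∀ n : ℤ, 2 ≤ n → h n = h (n - (h (n - 1) : ℤ)) + h (n - 2)) :
    ∀ n : ℕ, h (2 * n + 1) = n + 1 ∧ h (2 * n + 2) = h (2 * n) + h (n + 1) := by
  -- positivity of h
  have key : ∀ k : ℕ, 1 ≤ h (k : ℤ) := by
    intro k
    induction k using Nat.strong_induction_on with
    | _ k ih =>
      rcases le_or_gt (k : ℤ) 1 with hk | hk
      · rw [hinit _ hk]
      · have hk2 : (2 : ℤ) ≤ (k : ℤ) := hk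
        rw [hrec _ hk2]
        have hkn : 2 ≤ k := by exact_mod_cast hk2
        have e : ((k : ℤ) - 2) = ((k - 2 : ℕ) : ℤ) := by push_cast [hkn]; ring
        rw [e]
        have := ih (k - 2) (by omega)
        omega
  have hpos : ∀ m : ℤ, 1 ≤ h m := by
    intro m
    rcases le_or_gt m 1 with hm | hm
    · rw [hinit _ hm]
    · have : m = (m.toNat : ℤ) := by omega
      rw [this]; exact key _
  have h2 : ∀ m : ℤ, 2 ≤ m → 2 ≤ h m := by
    intro m hm
    rw [hrec _ hm]
    have := hpos (m - (h (m - 1) : ℤ))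
    have := hpos (m - 2)
    omega
  have main : ∀ n : ℕ, h (2 * n + 1) = n + 1 ∧ h (2 * n + 2) = h (2 * n) + h (n + 1)
      ∧ 2 * n + 2 ≤ h (2 * n + 2) := by
    intro n
    induction n using Nat.strong_induction_on with
    | _ n ih =>
      rcases Nat.eq_zero_or_pos n with rfl | hn
      · have h1 : h 1 = 1 := hinit 1 le_rfl
        have h0 : h 0 = 1 := hinit 0 (by norm_num)
        have h2v : h 2 = h (2 - (h (2 - 1) : ℤ)) + h (2 - 2) := hrec 2 le_rfl
        norm_num [h1] at h2v
        norm_num [h0, h1, h2v]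
      · obtain ⟨ihodd, iheven, ihge⟩ := ih (n - 1) (by omega)
        have e1 : (2 * ((n - 1 : ℕ) : ℤ) + 1) = 2 * (n : ℤ) - 1 := by
          push_cast [hn]; ring
        have e2 : (2 * ((n - 1 : ℕ) : ℤ) + 2) = 2 * (n : ℤ) := by
          push_cast [hn]; ring
        have e3 : (((n - 1 : ℕ) : ℤ) + 1) = (n : ℤ) := by push_cast [hn]; ring
        rw [e1] at ihodd
        rw [e2] at ihge
        -- odd part
        have hodd : h (2 * (n : ℤ) + 1) = n + 1 := by
          have hr := hrec (2 * (n : ℤ) + 1) (by omega)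
          have idx : 2 * (n : ℤ) + 1 - (h (2 * (n : ℤ) + 1 - 1) : ℤ) ≤ 1 := by
            have : (2 * n : ℕ) ≤ h (2 * (n : ℤ) + 1 - 1) := by
              have : 2 * (n : ℤ) + 1 - 1 = 2 * (n : ℤ) := by ring
              rw [this]; omega
            omega
          rw [hinit _ idx] at hr
          have : 2 * (n : ℤ) + 1 - 2 = 2 * (n : ℤ) - 1 := by ring
          rw [this] at hr
          omega
        -- even part
        have hr2 := hrec (2 * (n : ℤ) + 2) (by omega)
        have ide : 2 * (n : ℤ) + 2 - 1 = 2 * (n : ℤ) + 1 := by ring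
        rw [ide, hodd] at hr2
        have idx2 : 2 * (n : ℤ) + 2 - ((n + 1 : ℕ) : ℤ) = (n : ℤ) + 1 := by
          push_cast; ring
        have idx3 : 2 * (n : ℤ) + 2 - 2 = 2 * (n : ℤ) := by ring
        rw [idx2, idx3] at hr2
        have hn2 : 2 ≤ h ((n : ℤ) + 1) := h2 _ (by omega)
        refine ⟨hodd, ?_, ?_⟩
        · omega
        · omega
  intro n
  exact ⟨(main n).1, (main n).2.1⟩
end

section
/- Let h = h_{1,1} be as defined. Then for all natural numbers n, h(2n) = ∑_{i=0}^{n} h(i). -/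
/-!
The odd terms are `h (2n+1) = n + 1` and the even terms satisfy `h (2n+2) = h (n+1) + h (2n)`,
which telescopes to the partial sum. Both are proved by a joint induction: once
`h (2n+2) = ∑_{i ≤ n+1} h i ≥ 2n + 2` (every term from `h 2` on is at least `2`), the lookback
`2n + 3 - h (2n+2)` falls into the initial region `≤ 1`, where `h` is `1`.
-/

open Finset

namespace MetaFibonacci

variable {h : ℤ → ℕ}

theorem one_le (hinit : ∀ n : ℤ, n ≤ 1 → h n = 1)
    (hrec : ∀ n : ℤ, 2 ≤ n → h n = h (n - (h (n - 1) : ℤ)) + h (n - 2))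
    (n : ℤ) : 1 ≤ h n := by
  induction n using Int.strongRec (m := 2) with
  | lt n hn => rw [hinit n (by omega)]
  | ge n hn ih =>
    have := ih (n - 2) (by omega)
    rw [hrec n hn]
    omega

theorem two_le (hinit : ∀ n : ℤ, n ≤ 1 → h n = 1)
    (hrec : ∀ n : ℤ, 2 ≤ n → h n = h (n - (h (n - 1) : ℤ)) + h (n - 2))
    {n : ℤ} (hn : 2 ≤ n) : 2 ≤ h n := by
  have := one_le hinit hrec (n - h (n - 1))
  have := one_le hinit hrec (n - 2)
  rw [hrec n hn]
  omega

theorem two_mul_le_sum_range (hinit : ∀ n : ℤ, n ≤ 1 → h n = 1)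
    (hrec : ∀ n : ℤ, 2 ≤ n → h n = h (n - (h (n - 1) : ℤ)) + h (n - 2))
    (m : ℕ) : 2 * m ≤ ∑ i ∈ range (m + 1), h i := by
  induction m with
  | zero => exact Nat.zero_le _
  | succ m ih =>
    rw [sum_range_succ]
    rcases Nat.eq_zero_or_pos m with rfl | hm
    · simp [hinit 0 zero_le_one, hinit 1 le_rfl]
    · have := two_le hinit hrec (n := (m + 1 : ℕ)) (by omega)
      omega

theorem apply_two_mul_add_two
    (hrec : ∀ n : ℤ, 2 ≤ n → h n = h (n - (h (n - 1) : ℤ)) + h (n - 2))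
    {n : ℕ} (hodd : h (2 * n + 1) = n + 1) :
    h (2 * n + 2) = h (n + 1) + h (2 * n) := by
  rw [hrec _ (by omega), show (2 * n + 2 - 1 : ℤ) = 2 * n + 1 by ring, hodd]
  push_cast
  congr 2 <;> ring

theorem apply_two_mul_add_three (hinit : ∀ n : ℤ, n ≤ 1 → h n = 1)
    (hrec : ∀ n : ℤ, 2 ≤ n → h n = h (n - (h (n - 1) : ℤ)) + h (n - 2))
    {n : ℕ} (hbound : 2 * n + 2 ≤ h (2 * n + 2)) :
    h (2 * n + 3) = h (2 * n + 1) + 1 := by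
  rw [hrec _ (by omega), show (2 * n + 3 - 1 : ℤ) = 2 * n + 2 by ring,
    show (2 * n + 3 - 2 : ℤ) = 2 * n + 1 by ring, hinit _ (by omega), add_comm]

theorem apply_two_mul_and_apply_two_mul_add_one (hinit : ∀ n : ℤ, n ≤ 1 → h n = 1)
    (hrec : ∀ n : ℤ, 2 ≤ n → h n = h (n - (h (n - 1) : ℤ)) + h (n - 2))
    (n : ℕ) :
    h (2 * n) = ∑ i ∈ range (n + 1), h i ∧ h (2 * n + 1) = n + 1 := by
  induction n with
  | zero => simp [hinit 0 zero_le_one, hinit 1 le_rfl]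
  | succ n ih =>
    obtain ⟨heven, hodd⟩ := ih
    have heven' : h (2 * n + 2) = ∑ i ∈ range (n + 2), h i := by
      rw [apply_two_mul_add_two hrec hodd, heven, sum_range_succ _ (n + 1), add_comm]
      push_cast
      rfl
    have hbound : 2 * (n + 1) ≤ ∑ i ∈ range (n + 2), h i :=
      two_mul_le_sum_range hinit hrec (n + 1)
    push_cast
    refine ⟨by rw [mul_add, mul_one, heven'], ?_⟩
    rw [show (2 * (n + 1) + 1 : ℤ) = 2 * n + 3 by ring,
      apply_two_mul_add_three hinit hrec (by omega), hodd]

end MetaFibonacci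

/-- For the sequence `h = h_{1,1}` we have `h (2n) = ∑_{i=0}^{n} h i`. -/
theorem stmt1 (h : ℤ → ℕ)
    (hinit : ∀ n : ℤ, n ≤ 1 → h n = 1)
    (hrec : ∀ n : ℤ, 2 ≤ n → h n = h (n - (h (n - 1) : ℤ)) + h (n - 2)) :
    ∀ n : ℕ, h (2 * n) = ∑ i ∈ Finset.range (n + 1), h i :=
  fun n => (MetaFibonacci.apply_two_mul_and_apply_two_mul_add_one hinit hrec n).1
end

section
/- Let h = h_{1,1} and t be the Prouhet–Thue–Morse sequence, and for k ∈ ℕ and integers n ≥ 2^{k+1} - 2 set F(k,n) = ∑_{i=0}^{2^k - 1} t_i · h(n - 2i). Then for all k ∈ ℕ and n ≥ 2^{k+1} - 2: F(0,2n) = h(2n) and F(k,2n) = F(k-1,n) for k ≥ 1; moreover F(0,2n+1) = n+1, F(1,2n+1) = 1, and F(k,2n+1) = 0 for all k ≥ 2. -/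
/-! The recurrence forces `h(2n+1) = n + 1` and `h(2n) = h(n) + h(2n-2)`: by induction `h(2n) ≥ 2n`,
so in `h(2n+1) = h(2n+1 - h(2n)) + h(2n-1)` the first term is an initial value `1`, and then
`h(2n) = h(2n - h(2n-1)) + h(2n-2) = h(n) + h(2n-2)`.
Pairing the indices `2j, 2j+1` turns `∑_{i < 2^(k+1)} t_i f(i)` into `∑_{j < 2^k} t_j (f(2j) - f(2j+1))`.
For `F(k+1, 2n)` the differences are `h(2n-4j) - h(2n-4j-2) = h(n-2j)`, giving `F(k, n)`; for
`F(k+1, 2n+1)` they are all `1`, giving `∑_{j < 2^k} t_j`, which is `1` for `k = 0` and `0` otherwise. -/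

/-- `F h t k m = ∑_{i=0}^{2^k - 1} t i * h (m - 2i)`. -/
def metaF (h : ℤ → ℕ) (t : ℕ → ℤ) (k : ℕ) (m : ℤ) : ℤ :=
  ∑ i ∈ Finset.range (2 ^ k), t i * (h (m - 2 * i) : ℤ)

lemma Finset.sum_range_two_mul {M : Type*} [AddCommMonoid M] (f : ℕ → M) (m : ℕ) :
    ∑ i ∈ Finset.range (2 * m), f i = ∑ j ∈ Finset.range m, (f (2 * j) + f (2 * j + 1)) := by
  induction m with
  | zero => simp
  | succ m ih =>
    rw [Nat.mul_succ, Finset.sum_range_succ, Finset.sum_range_succ, Finset.sum_range_succ, ih,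
      add_assoc]

lemma one_le_sub_two_mul_of_mem_range {k j : ℕ} {n : ℤ} (hn : 2 ^ (k + 1) - 1 ≤ n)
    (hj : j ∈ Finset.range (2 ^ k)) : 1 ≤ n - 2 * j := by
  have hj : (j : ℤ) + 1 ≤ 2 ^ k := by exact_mod_cast Finset.mem_range.mp hj
  rw [pow_succ] at hn
  omega

section MetaFibonacci

variable {h : ℤ → ℕ} (hinit : ∀ n : ℤ, n ≤ 1 → h n = 1)
  (hrec : ∀ n : ℤ, 2 ≤ n → h n = h (n - (h (n - 1) : ℤ)) + h (n - 2))
  {t : ℕ → ℤ} (hte : ∀ n : ℕ, t (2 * n) = t n) (hto : ∀ n : ℕ, t (2 * n + 1) = - t n)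

include hrec in
lemma h_two_mul_of_h_two_mul_sub_one {x : ℤ} (hx : 1 ≤ x) (hodd : (h (2 * x - 1) : ℤ) = x) :
    h (2 * x) = h x + h (2 * x - 2) := by
  rw [hrec (2 * x) (by omega), hodd, show 2 * x - x = x by ring]

include hinit hrec in
lemma h_two_mul_add_one_of_le {x : ℤ} (hx : 1 ≤ x) (hge : 2 * x ≤ h (2 * x)) :
    h (2 * x + 1) = 1 + h (2 * x - 1) := by
  rw [hrec (2 * x + 1) (by omega), show 2 * x + 1 - 1 = 2 * x by ring,
    hinit (2 * x + 1 - h (2 * x)) (by omega), show 2 * x + 1 - 2 = 2 * x - 1 by ring]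

include hinit hrec in
lemma h_two_mul_add_one_and_le_h_two_mul (n : ℕ) :
    (h (2 * n + 1) : ℤ) = n + 1 ∧ 2 * (n : ℤ) ≤ h (2 * n) := by
  induction n using Nat.strong_induction_on with
  | _ n ih =>
  rcases Nat.eq_zero_or_pos n with rfl | hn
  · simp [hinit 1 le_rfl]
  have hodd : (h (2 * (n : ℤ) - 1) : ℤ) = n := by
    have := (ih (n - 1) (by omega)).1
    rwa [show 2 * ((n - 1 : ℕ) : ℤ) + 1 = 2 * n - 1 by omega,
      show ((n - 1 : ℕ) : ℤ) + 1 = n by omega] at this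
  have heven := h_two_mul_of_h_two_mul_sub_one hrec (x := n) (by omega) hodd
  have hge : 2 * (n : ℤ) ≤ h (2 * n) := by
    rcases Nat.lt_or_ge n 2 with hn2 | hn2
    · obtain rfl : n = 1 := by omega
      norm_num at heven
      norm_num [heven, hinit]
    -- `h(2n) = h(n) + h(2n-2) ≥ 2 + (2n-2)`
    have hn_ge : 2 ≤ (h n : ℤ) := by
      obtain ⟨c, rfl | rfl⟩ := Nat.even_or_odd' n
      · have := (ih c (by omega)).2
        push_cast at this ⊢
        omega
      · have := (ih c (by omega)).1
        push_cast at this ⊢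
        omega
    have hprev := (ih (n - 1) (by omega)).2
    rw [show 2 * ((n - 1 : ℕ) : ℤ) = 2 * n - 2 by omega] at hprev
    push_cast [heven]
    omega
  refine ⟨?_, hge⟩
  rw [h_two_mul_add_one_of_le hinit hrec (by omega) hge]
  push_cast [hodd]
  ring

include hinit hrec in
lemma h_two_mul_add_one {x : ℤ} (hx : 0 ≤ x) : (h (2 * x + 1) : ℤ) = x + 1 := by
  lift x to ℕ using hx
  exact (h_two_mul_add_one_and_le_h_two_mul hinit hrec x).1

include hinit hrec in
lemma h_two_mul {x : ℤ} (hx : 1 ≤ x) : (h (2 * x) : ℤ) = h x + h (2 * x - 2) := by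
  have hodd := h_two_mul_add_one hinit hrec (x := x - 1) (by omega)
  rw [show 2 * (x - 1) + 1 = 2 * x - 1 by ring, sub_add_cancel] at hodd
  exact_mod_cast h_two_mul_of_h_two_mul_sub_one hrec hx hodd

include hte hto in
lemma sum_range_two_mul_thueMorse_mul (f : ℕ → ℤ) (m : ℕ) :
    ∑ i ∈ Finset.range (2 * m), t i * f i
      = ∑ j ∈ Finset.range m, t j * (f (2 * j) - f (2 * j + 1)) := by
  rw [Finset.sum_range_two_mul]
  refine Finset.sum_congr rfl fun j _ => ?_
  rw [hte, hto]
  ring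

include hte hto in
lemma sum_range_two_pow_eq_zero {k : ℕ} (hk : 1 ≤ k) : ∑ i ∈ Finset.range (2 ^ k), t i = 0 := by
  obtain ⟨k, rfl⟩ := Nat.exists_eq_add_of_le' hk
  simpa [pow_succ', sub_self] using sum_range_two_mul_thueMorse_mul hte hto (fun _ => 1) (2 ^ k)

include hte hto in
lemma metaF_succ (k : ℕ) (m : ℤ) :
    metaF h t (k + 1) m
      = ∑ j ∈ Finset.range (2 ^ k), t j * ((h (m - 4 * j) : ℤ) - h (m - 4 * j - 2)) := by
  rw [metaF, pow_succ', sum_range_two_mul_thueMorse_mul hte hto]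
  refine Finset.sum_congr rfl fun j _ => ?_
  push_cast
  ring_nf

include hinit hrec hte hto in
lemma metaF_succ_two_mul {k : ℕ} {n : ℤ} (hn : 2 ^ (k + 1) - 1 ≤ n) :
    metaF h t (k + 1) (2 * n) = metaF h t k n := by
  rw [metaF_succ hte hto, metaF]
  refine Finset.sum_congr rfl fun j hj => ?_
  have heven := h_two_mul hinit hrec (one_le_sub_two_mul_of_mem_range hn hj)
  rw [show 2 * n - 4 * j = 2 * (n - 2 * j) by ring, heven]
  ring

include hinit hrec hte hto in
lemma metaF_succ_two_mul_add_one {k : ℕ} {n : ℤ} (hn : 2 ^ (k + 1) - 1 ≤ n) :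
    metaF h t (k + 1) (2 * n + 1) = ∑ j ∈ Finset.range (2 ^ k), t j := by
  rw [metaF_succ hte hto]
  refine Finset.sum_congr rfl fun j hj => ?_
  have hx := one_le_sub_two_mul_of_mem_range hn hj
  rw [show 2 * n + 1 - 4 * j = 2 * (n - 2 * j) + 1 by ring,
    show 2 * (n - 2 * j) + 1 - 2 = 2 * (n - 2 * j - 1) + 1 by ring,
    h_two_mul_add_one hinit hrec (by omega), h_two_mul_add_one hinit hrec (by omega)]
  ring

end MetaFibonacci

/-- relations for `F(k, 2n)` and `F(k, 2n+1)`, where `h = h_{1,1}` and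
`t` is the Prouhet–Thue–Morse sequence. -/
theorem stmt2 (h : ℤ → ℕ)
    (hinit : ∀ n : ℤ, n ≤ 1 → h n = 1)
    (hrec : ∀ n : ℤ, 2 ≤ n → h n = h (n - (h (n - 1) : ℤ)) + h (n - 2))
    (t : ℕ → ℤ) (ht0 : t 0 = 1)
    (hte : ∀ n : ℕ, t (2 * n) = t n) (hto : ∀ n : ℕ, t (2 * n + 1) = - t n) :
    ∀ k : ℕ, ∀ n : ℕ, 2 ^ (k + 1) - 2 ≤ (n : ℤ) →
      (k = 0 → metaF h t 0 (2 * n) = (h (2 * n) : ℤ) ∧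
        metaF h t 0 (2 * n + 1) = (n : ℤ) + 1) ∧
      (1 ≤ k → metaF h t k (2 * n) = metaF h t (k - 1) n) ∧
      (k = 1 → metaF h t 1 (2 * n + 1) = 1) ∧
      (2 ≤ k → metaF h t k (2 * n + 1) = 0) := by
  intro k n hn
  refine ⟨?_, ?_, ?_, ?_⟩
  · rintro rfl
    simp [metaF, ht0, h_two_mul_add_one hinit hrec (Int.natCast_nonneg n)]
  · intro hk
    obtain ⟨k, rfl⟩ := Nat.exists_eq_add_of_le' hk
    rw [Nat.add_sub_cancel]
    exact metaF_succ_two_mul hinit hrec hte hto (by rw [pow_succ] at hn; omega)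
  · rintro rfl
    rw [metaF_succ_two_mul_add_one hinit hrec hte hto (by simp at hn; omega)]
    simp [ht0]
  · intro hk
    obtain ⟨k, rfl⟩ := Nat.exists_eq_add_of_le' hk
    have hpow : (2 : ℤ) ^ (k + 2 + 1) = 2 ^ (k + 1) * 4 := by ring
    rw [metaF_succ_two_mul_add_one hinit hrec hte hto (by omega)]
    exact sum_range_two_pow_eq_zero hte hto (by omega)
end

section
/- Let h = h_{1,1} and t be the Prouhet–Thue–Morse sequence. Then for every k ∈ ℕ and every positive integer n, ∑_{i=0}^{2^k - 1} t_i · h(2^{k+1} n + 2^k - 2i) = n + 1. -/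
/-!
Induction along the recursion gives `h (2n+1) = n+1` together with `h (2n) ≥ 2n`; the latter makes
the inner argument `2n+3 - h (2n+2)` drop to `≤ 1`. Consequently `h (2m) = h (2m-2) + h m` for
`m ≥ 1`. Pairing the terms `i = 2j` and `i = 2j+1` of the sum and using `t (2j) = -t (2j+1) = t j`,
this identity collapses the sum at level `k+1` to the one at level `k`; at level `0` it is
`h (2n+1) = n+1`.
-/

theorem sum_range_two_mul_eq_sum_pairs {M : Type*} [AddCommMonoid M] (g : ℕ → M) (N : ℕ) :
    ∑ i ∈ Finset.range (2 * N), g i = ∑ j ∈ Finset.range N, (g (2 * j) + g (2 * j + 1)) := by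
  induction N with
  | zero => simp
  | succ N ih =>
    rw [Nat.mul_succ, Finset.sum_range_succ, Finset.sum_range_succ, Finset.sum_range_succ, ih,
      add_assoc]

structure IsMetaFibonacci (h : ℤ → ℕ) : Prop where
  apply_of_le_one : ∀ n : ℤ, n ≤ 1 → h n = 1
  apply_of_two_le : ∀ n : ℤ, 2 ≤ n → h n = h (n - (h (n - 1) : ℤ)) + h (n - 2)

structure IsThueMorse (t : ℕ → ℤ) : Prop where
  apply_zero : t 0 = 1
  apply_two_mul : ∀ n : ℕ, t (2 * n) = t n
  apply_two_mul_add_one : ∀ n : ℕ, t (2 * n + 1) = - t n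

namespace IsMetaFibonacci

variable {h : ℤ → ℕ} (hh : IsMetaFibonacci h)
include hh

theorem one_le_apply (m : ℤ) : 1 ≤ h m := by
  induction m using Int.strongRec (m := 2) with
  | lt m hm => rw [hh.apply_of_le_one m (by omega)]
  | ge m hm ih => rw [hh.apply_of_two_le m hm]; have := ih (m - 2) (by omega); omega

theorem two_le_apply {m : ℤ} (hm : 2 ≤ m) : 2 ≤ h m := by
  rw [hh.apply_of_two_le m hm]
  have := hh.one_le_apply (m - h (m - 1))
  have := hh.one_le_apply (m - 2)
  omega

theorem apply_two_mul_add_two {n : ℤ} (hn : 0 ≤ n) (hodd : h (2 * n + 1) = n + 1) :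
    h (2 * n + 2) = h (2 * n) + h (n + 1) := by
  rw [hh.apply_of_two_le _ (by omega), show 2 * n + 2 - 1 = 2 * n + 1 by ring, hodd,
    show 2 * n + 2 - (n + 1) = n + 1 by ring, show 2 * n + 2 - 2 = 2 * n by ring, add_comm]

theorem two_mul_le_apply_two_mul_add_two {n : ℕ} (heven : 2 * n ≤ h (2 * n))
    (hodd : h (2 * n + 1) = n + 1) : 2 * n + 2 ≤ h (2 * n + 2) := by
  rw [hh.apply_two_mul_add_two (by positivity) (by exact_mod_cast hodd)]
  have := hh.one_le_apply (2 * n)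
  have := hh.one_le_apply (n + 1)
  rcases Nat.eq_zero_or_pos n with rfl | hn
  · omega
  · have := hh.two_le_apply (m := n + 1) (by omega)
    omega

theorem apply_two_mul_add_one_and_le_apply_two_mul (n : ℕ) :
    h (2 * n + 1) = n + 1 ∧ 2 * n ≤ h (2 * n) := by
  induction n with
  | zero => simp [hh.apply_of_le_one]
  | succ n ih =>
    obtain ⟨hodd, heven⟩ := ih
    have hge := hh.two_mul_le_apply_two_mul_add_two heven hodd
    push_cast
    refine ⟨?_, by simpa only [mul_add_one] using hge⟩
    rw [hh.apply_of_two_le _ (by omega), show 2 * ((n : ℤ) + 1) + 1 - 1 = 2 * n + 2 by ring,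
      hh.apply_of_le_one _ (by omega), show 2 * ((n : ℤ) + 1) + 1 - 2 = 2 * n + 1 by ring, hodd]
    ring

theorem apply_two_mul_add_one (n : ℕ) : h (2 * n + 1) = n + 1 :=
  (hh.apply_two_mul_add_one_and_le_apply_two_mul n).1

theorem apply_two_mul {m : ℤ} (hm : 1 ≤ m) : h (2 * m) = h (2 * m - 2) + h m := by
  obtain ⟨n, rfl⟩ : ∃ n : ℕ, m = n + 1 := ⟨(m - 1).toNat, by omega⟩
  have := hh.apply_two_mul_add_two (n := n) (by positivity)
    (by exact_mod_cast hh.apply_two_mul_add_one n)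
  rw [show 2 * ((n : ℤ) + 1) = 2 * n + 2 by ring, this, add_sub_cancel_right]

end IsMetaFibonacci

namespace IsThueMorse

variable {t : ℕ → ℤ} (ht : IsThueMorse t) {g : ℤ → ℤ}
  (hg : ∀ m : ℤ, 1 ≤ m → g (2 * m) = g (2 * m - 2) + g m) {n : ℤ} (hn : 1 ≤ n)
include ht hg hn

theorem sum_range_two_pow_succ (k : ℕ) :
    ∑ i ∈ Finset.range (2 ^ (k + 1)), t i * g (2 ^ (k + 2) * n + 2 ^ (k + 1) - 2 * i) =
      ∑ j ∈ Finset.range (2 ^ k), t j * g (2 ^ (k + 1) * n + 2 ^ k - 2 * j) := by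
  rw [pow_succ', sum_range_two_mul_eq_sum_pairs]
  refine Finset.sum_congr rfl fun j hj => ?_
  have hj : (j : ℤ) + 1 ≤ 2 ^ k := by exact_mod_cast Finset.mem_range.mp hj
  have hm : 1 ≤ 2 ^ (k + 1) * n + 2 ^ k - 2 * (j : ℤ) := by
    have : 2 * 2 ^ k ≤ 2 ^ (k + 1) * n :=
      pow_succ' (2 : ℤ) k ▸ le_mul_of_one_le_right (by positivity) hn
    omega
  set m : ℤ := 2 ^ (k + 1) * n + 2 ^ k - 2 * j
  have heven : (2 : ℤ) ^ (k + 2) * n + 2 ^ (k + 1) - 2 * ((2 * j : ℕ) : ℤ) = 2 * m := by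
    push_cast; ring
  have hodd : (2 : ℤ) ^ (k + 2) * n + 2 ^ (k + 1) - 2 * ((2 * j + 1 : ℕ) : ℤ) = 2 * m - 2 := by
    push_cast; ring
  rw [heven, hodd, ht.apply_two_mul, ht.apply_two_mul_add_one, hg m hm]
  ring

theorem sum_range_two_pow (k : ℕ) :
    ∑ i ∈ Finset.range (2 ^ k), t i * g (2 ^ (k + 1) * n + 2 ^ k - 2 * i) = g (2 * n + 1) := by
  induction k with
  | zero => simp [ht.apply_zero]
  | succ k ih => rw [ht.sum_range_two_pow_succ hg hn, ih]

end IsThueMorse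

/-- For every `k ∈ ℕ` and positive integer `n`,
`∑_{i=0}^{2^k - 1} t i * h (2^{k+1} n + 2^k - 2i) = n + 1`, where `h = h_{1,1}` and
`t` is the Prouhet–Thue–Morse sequence. -/
theorem stmt3 (h : ℤ → ℕ)
    (hinit : ∀ n : ℤ, n ≤ 1 → h n = 1)
    (hrec : ∀ n : ℤ, 2 ≤ n → h n = h (n - (h (n - 1) : ℤ)) + h (n - 2))
    (t : ℕ → ℤ) (ht0 : t 0 = 1)
    (hte : ∀ n : ℕ, t (2 * n) = t n) (hto : ∀ n : ℕ, t (2 * n + 1) = - t n) :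
    ∀ k : ℕ, ∀ n : ℕ, 1 ≤ n →
      ∑ i ∈ Finset.range (2 ^ k),
        t i * (h (2 ^ (k + 1) * (n : ℤ) + 2 ^ k - 2 * i) : ℤ) = (n : ℤ) + 1 := by
  intro k n hn
  have hh : IsMetaFibonacci h := ⟨hinit, hrec⟩
  have ht : IsThueMorse t := ⟨ht0, hte, hto⟩
  have hg (m : ℤ) (hm : 1 ≤ m) : (h (2 * m) : ℤ) = h (2 * m - 2) + h m := by
    exact_mod_cast hh.apply_two_mul hm
  rw [ht.sum_range_two_pow (g := fun m => (h m : ℤ)) hg (by exact_mod_cast hn),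
    hh.apply_two_mul_add_one, Nat.cast_succ]
end

section
/- Let h = h_{1,1} be as defined. There is no polynomial P ∈ ℤ[x] such that h(2n) = P(n) for infinitely many natural numbers n. -/
private theorem hkey (h : ℤ → ℕ)
    (hinit : ∀ n : ℤ, n ≤ 1 → h n = 1)
    (hrec : ∀ n : ℤ, 2 ≤ n → h n = h (n - (h (n - 1) : ℤ)) + h (n - 2)) :
    ∀ k : ℕ, h (2*(k:ℤ)+1) = k+1 ∧ h (2*(k:ℤ)+2) = h ((k:ℤ)+1) + h (2*(k:ℤ))
      ∧ 2*(k+1) ≤ h (2*(k:ℤ)+2) := by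
  intro k
  induction k using Nat.strong_induction_on with
  | _ k IH =>
    match k with
    | 0 =>
      have h1 : h 1 = 1 := hinit 1 le_rfl
      have h0 : h 0 = 1 := hinit 0 (by norm_num)
      have h2 : h 2 = h 1 + h 0 := by
        have := hrec 2 le_rfl
        rw [show (2:ℤ)-1 = 1 from by ring] at this
        rw [this, h1]
        norm_num [h1, h0]
      refine ⟨by norm_num [h1], by norm_num [h2, h1], by norm_num [h2, h1, h0]⟩
    | (k+1 : ℕ) =>
      set K := k + 1 with hK
      obtain ⟨ha', hb', hc'⟩ := IH k (Nat.lt_succ_self k)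
      have e1 : (2*(K:ℤ)) = 2*(k:ℤ)+2 := by push_cast [hK]; ring
      have hbnd : 2*K ≤ h (2*(K:ℤ)) := by rw [e1]; exact hc'
      have ha : h (2*(K:ℤ)+1) = K+1 := by
        have hr := hrec (2*(K:ℤ)+1) (by push_cast [hK]; omega)
        rw [show (2*(K:ℤ)+1-1) = 2*(K:ℤ) from by ring,
            show (2*(K:ℤ)+1-2) = 2*(k:ℤ)+1 from by push_cast [hK]; ring] at hr
        have hfirst : h (2*(K:ℤ)+1 - (h (2*(K:ℤ)) : ℤ)) = 1 := by
          apply hinit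
          have : (2*(K:ℤ)) ≤ (h (2*(K:ℤ)) : ℤ) := by exact_mod_cast hbnd
          push_cast [hK] at this ⊢
          omega
        rw [hr, hfirst, ha']
        omega
      have hb : h (2*(K:ℤ)+2) = h ((K:ℤ)+1) + h (2*(K:ℤ)) := by
        have hr := hrec (2*(K:ℤ)+2) (by push_cast [hK]; omega)
        rw [show (2*(K:ℤ)+2-1) = 2*(K:ℤ)+1 from by ring,
            show (2*(K:ℤ)+2-2) = 2*(K:ℤ) from by ring, ha] at hr
        rw [hr, show (2*(K:ℤ)+2 - ((K+1 : ℕ) : ℤ)) = (K:ℤ)+1 from by push_cast; ring]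
      have hK2 : 2 ≤ h ((K:ℤ)+1) := by
        rcases Nat.even_or_odd (K+1) with ⟨j, hj⟩ | ⟨j, hj⟩
        · have hj1 : 1 ≤ j := by omega
          obtain ⟨-, -, hcc⟩ := IH (j-1) (by omega)
          have : 2*((j-1:ℕ)+1) ≤ h (2*((j-1:ℕ):ℤ)+2) := hcc
          rw [show (2*(((j-1:ℕ)):ℤ)+2) = ((K:ℤ)+1) from by push_cast [hK]; omega] at this
          omega
        · have hj1 : 1 ≤ j := by omega
          obtain ⟨haa, -, -⟩ := IH j (by omega)
          rw [show (2*((j:ℕ):ℤ)+1) = ((K:ℤ)+1) from by push_cast; omega] at haa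
          omega
      refine ⟨ha, hb, ?_⟩
      rw [hb]
      omega

/-- There is no polynomial `P ∈ ℤ[x]` such that `h (2n) = P(n)` for
infinitely many natural numbers `n`, where `h = h_{1,1}`. -/
theorem stmt4 (h : ℤ → ℕ)
    (hinit : ∀ n : ℤ, n ≤ 1 → h n = 1)
    (hrec : ∀ n : ℤ, 2 ≤ n → h n = h (n - (h (n - 1) : ℤ)) + h (n - 2)) :
    ¬ ∃ P : Polynomial ℤ, {n : ℕ | (h (2 * n) : ℤ) = P.eval (n : ℤ)}.Infinite := by
  have hkey' := hkey h hinit hrec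
  set g : ℕ → ℕ := fun k => h (2*(k:ℤ)) with hg
  have gsucc : ∀ k : ℕ, g (k+1) = h ((k:ℤ)+1) + g k := by
    intro k
    have := (hkey' k).2.1
    show h (2*((k+1:ℕ):ℤ)) = _
    rw [show (2*((k+1:ℕ):ℤ)) = 2*(k:ℤ)+2 from by push_cast; ring, this]
  have gmono : Monotone g := by
    apply monotone_nat_of_le_succ
    intro k
    rw [gsucc k]
    omega
  have gpos : ∀ k, 1 ≤ g k := by
    intro k
    have h0 : g 0 = 1 := by
      show h (2*((0:ℕ):ℤ)) = 1
      norm_num [hinit 0 (by norm_num)]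
    have := gmono (Nat.zero_le k)
    omega
  have lemB : ∀ t s : ℕ, s * g (t+1) ≤ g (2*(t+s)) := by
    intro t s
    induction s with
    | zero => simp
    | succ s ih =>
      have e1 : 2*(t+(s+1)) = (2*(t+s)+1)+1 := by ring
      rw [e1, gsucc (2*(t+s)+1)]
      have e2 : ((2*(t+s)+1 : ℕ):ℤ)+1 = 2*((t+s+1:ℕ):ℤ) := by push_cast; ring
      rw [e2]
      have hmid : g (t+1) ≤ h (2*((t+s+1:ℕ):ℤ)) := gmono (show t+1 ≤ t+s+1 by omega)
      have h3 : g (2*(t+s)) ≤ g (2*(t+s)+1) := gmono (by omega)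
      have h4 : (s+1) * g (t+1) = s * g (t+1) + g (t+1) := Nat.succ_mul _ _
      omega
  have lemB4 : ∀ t : ℕ, t * g t ≤ g (4*t) := by
    intro t
    have hB := lemB t t
    have h2 : g t ≤ g (t+1) := gmono (by omega)
    rw [show 2*(t+t) = 4*t from by ring] at hB
    calc t * g t ≤ t * g (t+1) := Nat.mul_le_mul_left _ h2
      _ ≤ g (4*t) := hB
  have lemC : ∀ k t : ℕ, 1 ≤ t → t^k * g t ≤ g (4^k * t) := by
    intro k
    induction k with
    | zero => intro t _; simp
    | succ k ih =>
      intro t ht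
      rw [show 4^(k+1) * t = 4^k * (4*t) from by ring]
      have h1 := ih (4*t) (by omega)
      have h2 := lemB4 t
      calc t^(k+1) * g t = t^k * (t * g t) := by ring
        _ ≤ t^k * g (4*t) := Nat.mul_le_mul_left _ h2
        _ ≤ (4*t)^k * g (4*t) := Nat.mul_le_mul_right _ (Nat.pow_le_pow_left (by omega) k)
        _ ≤ g (4^k * (4*t)) := h1
  have superpoly : ∀ d : ℕ, ∃ N : ℕ, ∀ n : ℕ, N ≤ n → n ^ d ≤ g n := by
    intro d
    set M := 4^(2*d) with hM
    have hMpos : 1 ≤ M := Nat.one_le_pow _ _ (by norm_num)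
    refine ⟨M * (2*M+2), fun n hn => ?_⟩
    obtain ⟨t, ht⟩ : ∃ t, t = n / M := ⟨_, rfl⟩
    have htM : M * t ≤ n := by rw [ht]; exact Nat.mul_div_le n M
    have htlb : 2*M+2 ≤ t := by
      rw [ht]
      exact (Nat.le_div_iff_mul_le (by omega)).mpr (by rw [Nat.mul_comm]; exact hn)
    have ht' : M * t + n % M = n := by rw [ht]; exact Nat.div_add_mod n M
    have hmod : n % M < M := Nat.mod_lt n (by omega)
    have hub : n < M * t + M := by omega
    have hnt2 : n ≤ t * t := by nlinarith [htlb, hub, hMpos]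
    have h1 : t^(2*d) * g t ≤ g (M * t) := lemC (2*d) t (by omega)
    have h2 : g (M*t) ≤ g n := gmono htM
    have h3 : n^d ≤ (t*t)^d := Nat.pow_le_pow_left hnt2 d
    have h4 : (t*t)^d = t^(2*d) := by rw [mul_pow, ← pow_add, two_mul]
    have h5 := gpos t
    calc n^d ≤ t^(2*d) := by rw [← h4]; exact h3
      _ ≤ t^(2*d) * g t := Nat.le_mul_of_pos_right _ (by omega)
      _ ≤ g n := le_trans h1 h2
  rintro ⟨P, hS⟩
  set d := P.natDegree with hd
  set C : ℕ := ∑ i ∈ Finset.range (d+1), (P.coeff i).natAbs with hC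
  obtain ⟨N, hN⟩ := superpoly (d+1)
  obtain ⟨n, hnS, hn⟩ := hS.exists_gt (max N (C+1))
  have hnN : N ≤ n := le_trans (le_max_left _ _) (le_of_lt hn)
  have hnC : C + 1 ≤ n := le_trans (le_max_right _ _) (le_of_lt hn)
  have hn1 : 1 ≤ n := by omega
  have hpow : n^(d+1) ≤ g n := hN n hnN
  have heq : (g n : ℤ) = P.eval (n:ℤ) := hnS
  have hbound : P.eval (n:ℤ) ≤ (C:ℤ) * (n:ℤ)^d := by
    rw [Polynomial.eval_eq_sum_range, hC]
    push_cast
    rw [Finset.sum_mul]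
    apply Finset.sum_le_sum
    intro i hi
    have hn1' : (1:ℤ) ≤ (n:ℤ) := by exact_mod_cast hn1
    have hA : P.coeff i * (n:ℤ)^i ≤ |P.coeff i| * (n:ℤ)^i :=
      mul_le_mul_of_nonneg_right (le_abs_self _) (by positivity)
    have hB : ((n:ℤ))^i ≤ (n:ℤ)^d :=
      pow_le_pow_right₀ hn1' (Nat.lt_succ_iff.mp (Finset.mem_range.mp hi))
    calc P.coeff i * (n:ℤ)^i ≤ |P.coeff i| * (n:ℤ)^i := hA
      _ ≤ |P.coeff i| * (n:ℤ)^d := mul_le_mul_of_nonneg_left hB (abs_nonneg _)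
  have hCn : (C:ℤ) < (n:ℤ) := by exact_mod_cast (by omega : C < n)
  have hfinal : ((n:ℕ)^(d+1) : ℤ) ≤ (C:ℤ) * (n:ℤ)^d := by
    calc ((n:ℕ)^(d+1) : ℤ) ≤ (g n : ℤ) := by exact_mod_cast hpow
      _ = P.eval (n:ℤ) := heq
      _ ≤ (C:ℤ) * (n:ℤ)^d := hbound
  have hlt : (C:ℤ) * (n:ℤ)^d < ((n:ℕ)^(d+1) : ℤ) := by
    rw [pow_succ]
    have : (0:ℤ) < (n:ℤ)^d := by positivity
    nlinarith
  omega
end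

section
/- Let H ∈ ℤ[[X]] be the formal power series H(X) = ∑_{n=0}^{∞} h(n) X^n, where h = h_{1,1}. Then H satisfies the Mahler-type functional equation (1 - X²)⁻¹ · H(X²) - H(X) + X · ((1 - X²)⁻¹)² = 0, where (1 - X²)⁻¹ denotes the multiplicative inverse of the unit 1 - X² in ℤ[[X]] and H(X²) denotes the substitution of X² into H. -/
open PowerSeries

/-!
Splitting `h` by parity: `h (2m+1) = m+1` and `h (2m+2) = h (m+1) + h (2m)`, because
`h (2m+2) ≥ 2m+2` sends the first recursive argument of `h (2m+3)` into the initial range.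
Hence `(1 - X²) H` has coefficient `h m` at `X^{2m}` and `1` at `X^{2m+1}`, i.e.
`(1 - X²) H = H(X²) + X (1 - X²)⁻¹`, which is the functional equation after dividing by `1 - X²`.
-/

namespace PowerSeries

variable {R : Type*} [CommRing R]

theorem coeff_one_sub_X_pow_mul_of_lt (F : R⟦X⟧) {k n : ℕ} (hn : n < k) :
    coeff n ((1 - X ^ k) * F) = coeff n F := by
  rw [sub_mul, one_mul, map_sub, coeff_X_pow_mul', if_neg (by omega), sub_zero]

theorem coeff_add_one_sub_X_pow_mul (F : R⟦X⟧) (k n : ℕ) :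
    coeff (n + k) ((1 - X ^ k) * F) = coeff (n + k) F - coeff n F := by
  rw [sub_mul, one_mul, map_sub, coeff_X_pow_mul]

theorem coeff_of_one_sub_X_sq_mul_eq_X {V : R⟦X⟧} (hV : (1 - X ^ 2) * V = X)
    (m : ℕ) : coeff (2 * m) V = 0 ∧ coeff (2 * m + 1) V = 1 := by
  induction m with
  | zero =>
    constructor
    · simpa [hV] using (coeff_one_sub_X_pow_mul_of_lt V (k := 2) (n := 0) (by omega)).symm
    · simpa [hV] using (coeff_one_sub_X_pow_mul_of_lt V (k := 2) (n := 1) (by omega)).symm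
  | succ m ih =>
    have heven := coeff_add_one_sub_X_pow_mul V 2 (2 * m)
    have hodd := coeff_add_one_sub_X_pow_mul V 2 (2 * m + 1)
    rw [hV, coeff_X, if_neg (by omega), eq_comm, sub_eq_zero] at heven hodd
    rw [show 2 * (m + 1) = 2 * m + 2 by ring, show 2 * m + 2 + 1 = 2 * m + 1 + 2 by ring,
      heven, hodd]
    exact ih

end PowerSeries

structure IsMetaFibonacci_s5 (h : ℤ → ℕ) : Prop where
  eq_one_of_le_one : ∀ n : ℤ, n ≤ 1 → h n = 1
  eq_of_two_le : ∀ n : ℤ, 2 ≤ n → h n = h (n - (h (n - 1) : ℤ)) + h (n - 2)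

namespace IsMetaFibonacci_s5

variable {h : ℤ → ℕ}

theorem apply_add_two (hh : IsMetaFibonacci_s5 h) {n : ℤ} (hn : 0 ≤ n) :
    h (n + 2) = h (n + 2 - h (n + 1)) + h n := by
  have := hh.eq_of_two_le (n + 2) (by omega)
  rwa [add_sub_cancel_right, show n + 2 - 1 = n + 1 by ring] at this

theorem one_le (hh : IsMetaFibonacci_s5 h) (n : ℤ) : 1 ≤ h n := by
  induction n using Int.strongRec (m := 2) with
  | lt n hn => rw [hh.eq_one_of_le_one n (by omega)]
  | ge n hn ih =>
    rw [hh.eq_of_two_le n hn]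
    exact (ih (n - 2) (by omega)).trans (Nat.le_add_left _ _)

theorem two_le (hh : IsMetaFibonacci_s5 h) {n : ℤ} (hn : 2 ≤ n) : 2 ≤ h n := by
  rw [hh.eq_of_two_le n hn]
  exact Nat.add_le_add (hh.one_le _) (hh.one_le _)

theorem apply_odd_and_le_apply_even (hh : IsMetaFibonacci_s5 h) (m : ℕ) :
    h (2 * m + 1) = m + 1 ∧ 2 * m + 2 ≤ h (2 * m + 2) := by
  induction m with
  | zero =>
    have h1 : h 1 = 1 := hh.eq_one_of_le_one 1 le_rfl
    have h2 : h 2 = h 1 + h 0 := by simpa [h1] using hh.apply_add_two le_rfl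
    simp [h1, h2, hh.eq_one_of_le_one 0 zero_le_one]
  | succ m ih =>
    obtain ⟨hodd, heven⟩ := ih
    have hodd' : h (2 * m + 3) = m + 2 := by
      have := hh.apply_add_two (n := 2 * m + 1) (by omega)
      rw [show (2 * m + 1 + 2 : ℤ) = 2 * m + 3 by ring, show (2 * m + 1 + 1 : ℤ) = 2 * m + 2 by ring,
        hh.eq_one_of_le_one (2 * m + 3 - h (2 * m + 2)) (by omega), hodd] at this
      omega
    have heven' : h (2 * m + 4) = h (m + 2) + h (2 * m + 2) := by
      have := hh.apply_add_two (n := 2 * m + 2) (by omega)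
      rwa [show (2 * m + 2 + 2 : ℤ) = 2 * m + 4 by ring, show (2 * m + 2 + 1 : ℤ) = 2 * m + 3 by ring,
        hodd', show (2 * m + 4 - ((m + 2 : ℕ) : ℤ)) = m + 2 by push_cast; ring] at this
    push_cast
    refine ⟨by rw [show (2 * (m + 1) + 1 : ℤ) = 2 * m + 3 by ring, hodd'], ?_⟩
    rw [show (2 * (m + 1) + 2 : ℤ) = 2 * m + 4 by ring, heven']
    have := hh.two_le (n := m + 2) (by omega)
    omega

theorem apply_odd (hh : IsMetaFibonacci_s5 h) (m : ℕ) : h (2 * m + 1) = m + 1 :=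
  (hh.apply_odd_and_le_apply_even m).1

theorem apply_even_add_two (hh : IsMetaFibonacci_s5 h) (m : ℕ) :
    h (2 * m + 2) = h (m + 1) + h (2 * m) := by
  have := hh.apply_add_two (n := 2 * m) (by omega)
  rwa [hh.apply_odd, show (2 * m + 2 - ((m + 1 : ℕ) : ℤ)) = m + 1 by push_cast; ring] at this

theorem coeff_one_sub_X_sq_mul (hh : IsMetaFibonacci_s5 h) {H : ℤ⟦X⟧}
    (hH : ∀ n : ℕ, coeff n H = h n) (m : ℕ) :
    coeff (2 * m) ((1 - X ^ 2) * H) = (h m : ℤ) ∧ coeff (2 * m + 1) ((1 - X ^ 2) * H) = 1 := by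
  cases m with
  | zero =>
    rw [coeff_one_sub_X_pow_mul_of_lt H (k := 2) (n := 2 * 0) (by omega),
      coeff_one_sub_X_pow_mul_of_lt H (k := 2) (n := 2 * 0 + 1) (by omega), hH, hH]
    simp [hh.eq_one_of_le_one 0 zero_le_one, hh.eq_one_of_le_one 1 le_rfl]
  | succ m =>
    rw [show 2 * (m + 1) = 2 * m + 2 by ring, show 2 * m + 2 + 1 = 2 * m + 1 + 2 by ring,
      coeff_add_one_sub_X_pow_mul, coeff_add_one_sub_X_pow_mul, hH, hH, hH, hH]
    push_cast
    rw [hh.apply_odd, show (2 * m + 1 + 2 : ℤ) = 2 * (m + 1 : ℕ) + 1 by push_cast; ring,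
      hh.apply_odd, hh.apply_even_add_two]
    push_cast
    constructor <;> ring

end IsMetaFibonacci_s5

/-- The generating function `H(X) = ∑ h(n) Xⁿ ∈ ℤ[[X]]` of `h = h_{1,1}`
satisfies `(1 - X²)⁻¹ · H(X²) - H(X) + X · ((1 - X²)⁻¹)² = 0`.  Here `U` denotes the
multiplicative inverse of the unit `1 - X²` in `ℤ[[X]]` and `H2` denotes the power
series `H(X²)` obtained by substituting `X²` into `H`, characterized by its
coefficients: the coefficient of `X^{2n}` in `H2` is `h(n)` and odd coefficients
vanish. -/
theorem stmt5 (h : ℤ → ℕ)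
    (hinit : ∀ n : ℤ, n ≤ 1 → h n = 1)
    (hrec : ∀ n : ℤ, 2 ≤ n → h n = h (n - (h (n - 1) : ℤ)) + h (n - 2))
    (H : PowerSeries ℤ) (hH : ∀ n : ℕ, PowerSeries.coeff (R := ℤ) n H = (h n : ℤ))
    (U : PowerSeries ℤ) (hU : (1 - PowerSeries.X ^ 2) * U = 1)
    (H2 : PowerSeries ℤ)
    (hH2e : ∀ n : ℕ, PowerSeries.coeff (R := ℤ) (2 * n) H2 = (h n : ℤ))
    (hH2o : ∀ n : ℕ, PowerSeries.coeff (R := ℤ) (2 * n + 1) H2 = 0) :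
    U * H2 - H + PowerSeries.X * U ^ 2 = 0 := by
  have hh : IsMetaFibonacci_s5 h := ⟨hinit, hrec⟩
  have hXU := coeff_of_one_sub_X_sq_mul_eq_X (V := X * U) (by linear_combination X * hU)
  have hD : (1 - X ^ 2) * H = H2 + X * U := by
    ext n
    obtain ⟨m, rfl | rfl⟩ := Nat.even_or_odd' n
    · rw [map_add, (hh.coeff_one_sub_X_sq_mul hH m).1, hH2e, (hXU m).1, add_zero]
    · rw [map_add, (hh.coeff_one_sub_X_sq_mul hH m).2, hH2o, (hXU m).2, zero_add]
  linear_combination -U * hD + H * hU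
end

section
/- Let h = h_{1,1} be as defined and let bin be the binary partition function. Then h(2n) ≥ bin(n) for all natural numbers n. -/
/-- `h (2n) ≥ bin n` for all natural `n`, where `h = h_{1,1}` and
`bin` is the binary partition function. -/
theorem stmt8 (h : ℤ → ℕ)
    (hinit : ∀ n : ℤ, n ≤ 1 → h n = 1)
    (hrec : ∀ n : ℤ, 2 ≤ n → h n = h (n - (h (n - 1) : ℤ)) + h (n - 2))
    (bin : ℕ → ℕ) (hbin0 : bin 0 = 1)
    (hbine : ∀ n : ℕ, 1 ≤ n → bin (2 * n) = bin (2 * n - 1) + bin n)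
    (hbino : ∀ n : ℕ, bin (2 * n + 1) = bin (2 * n)) :
    ∀ n : ℕ, bin n ≤ h (2 * n) := by
  suffices H : ∀ n : ℕ, h (2 * (n : ℤ) + 1) = n + 1 ∧ 2 * n ≤ h (2 * (n : ℤ))
      ∧ bin n ≤ h (2 * (n : ℤ)) by
    intro n
    have := (H n).2.2
    simpa using this
  intro n
  induction n using Nat.strong_induction_on with
  | _ n ih =>
    match n with
    | 0 =>
      have h1 : h 1 = 1 := hinit 1 le_rfl
      have h0 : h 0 = 1 := hinit 0 (by norm_num)
      refine ⟨by simpa using h1, ?_, ?_⟩ <;> simp [h0, hbin0]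
    | (n+1) =>
      obtain ⟨h1, h2, h3⟩ := ih n (by omega)
      -- key: h (2(n+1)) = h (n+1) + h (2n)
      have key : h (2 * ((n:ℤ) + 1)) = h ((n:ℤ) + 1) + h (2 * (n:ℤ)) := by
        have := hrec (2 * (n:ℤ) + 2) (by omega)
        have e1 : (2 * (n:ℤ) + 2) - 1 = 2 * n + 1 := by ring
        rw [e1, h1] at this
        have e2 : (2 * (n:ℤ) + 2) - ((n + 1 : ℕ) : ℤ) = (n:ℤ) + 1 := by
          push_cast; ring
        rw [e2] at this
        have e3 : (2 * (n:ℤ) + 2) - 2 = 2 * n := by ring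
        rw [e3] at this
        have e4 : 2 * ((n:ℤ) + 1) = 2 * (n:ℤ) + 2 := by ring
        rw [e4, this]
      -- h(n+1) ≥ 2 when n ≥ 1
      have hn1 : 1 ≤ n → 2 ≤ h ((n:ℤ) + 1) := by
        intro hn
        rcases Nat.even_or_odd (n+1) with ⟨m, hm⟩ | ⟨m, hm⟩
        · have hm1 : 1 ≤ m := by omega
          obtain ⟨_, hA, _⟩ := ih m (by omega)
          have e : ((n:ℤ) + 1) = 2 * m := by push_cast; omega
          rw [e]; omega
        · have hm1 : 1 ≤ m := by omega
          obtain ⟨hA, _, _⟩ := ih m (by omega)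
          have e : ((n:ℤ) + 1) = 2 * m + 1 := by push_cast; omega
          rw [e, hA]; omega
      have h2' : 2 * (n + 1) ≤ h (2 * ((n:ℤ) + 1)) := by
        rcases Nat.eq_zero_or_pos n with rfl | hn
        · rw [key]
          have h0 : h 0 = 1 := hinit 0 (by norm_num)
          have h1' : h 1 = 1 := hinit 1 le_rfl
          simp [h0, h1']
        · have := hn1 hn
          rw [key]; omega
      have h1' : h (2 * ((n:ℤ) + 1) + 1) = (n + 1) + 1 := by
        have := hrec (2 * (n:ℤ) + 3) (by omega)
        have e1 : (2 * (n:ℤ) + 3) - 1 = 2 * ((n:ℤ) + 1) := by ring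
        rw [e1] at this
        have hle : (2 * (n:ℤ) + 3) - (h (2 * ((n:ℤ) + 1)) : ℤ) ≤ 1 := by
          have : (2 * (n + 1) : ℤ) ≤ (h (2 * ((n:ℤ) + 1)) : ℤ) := by
            exact_mod_cast Nat.cast_le.mpr h2'
          omega
        rw [hinit _ hle] at this
        have e2 : (2 * (n:ℤ) + 3) - 2 = 2 * n + 1 := by ring
        rw [e2, h1] at this
        have e3 : 2 * ((n:ℤ) + 1) + 1 = 2 * (n:ℤ) + 3 := by ring
        rw [e3, this]; omega
      have h3' : bin (n + 1) ≤ h (2 * ((n:ℤ) + 1)) := by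
        rcases Nat.even_or_odd (n+1) with ⟨m, hm⟩ | ⟨m, hm⟩
        · -- n+1 = 2m, so n = 2m-1
          have hm1 : 1 ≤ m := by omega
          have hb := hbine m hm1
          have hn2m : n + 1 = 2 * m := by omega
          obtain ⟨_, _, hBm⟩ := ih m (by omega)
          have e : ((n:ℤ) + 1) = 2 * m := by push_cast; omega
          have e5 : bin (2 * m - 1) = bin n := by congr 1; omega
          rw [key, e]
          rw [hn2m, hb, e5]
          omega
        · -- n+1 = 2m+1, so n = 2m
          have hn2m : n = 2 * m := by omega
          rw [key]
          calc bin (n+1) = bin n := by rw [hn2m, hbino]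
            _ ≤ h (2 * (n:ℤ)) := h3
            _ ≤ h ((n:ℤ)+1) + h (2 * (n:ℤ)) := Nat.le_add_left _ _
      simp only [Nat.cast_add, Nat.cast_one]
      exact ⟨h1', h2', h3'⟩
end

section
/- Let h = h_{1,1} be as defined and let r(n) = h(n) mod 2 for n ∈ ℕ. Then the sequence (r(n))_{n∈ℕ} is 2-automatic; that is, its 2-kernel { (r(2^j n + i))_{n∈ℕ} : j ∈ ℕ, 0 ≤ i < 2^j } is a finite set of sequences. -/
lemma keyA (h : ℤ → ℕ)
    (hinit : ∀ n : ℤ, n ≤ 1 → h n = 1)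
    (hrec : ∀ n : ℤ, 2 ≤ n → h n = h (n - (h (n - 1) : ℤ)) + h (n - 2)) :
    ∀ k : ℕ, (h (2*(k:ℤ)+1) = k+1) ∧ (1 ≤ k → 2*k ≤ h (2*(k:ℤ)))
      ∧ (h (2*(k:ℤ)+2) = h ((k:ℤ)+1) + h (2*(k:ℤ))) := by
  intro k
  induction k using Nat.strong_induction_on with
  | _ k IH =>
  have h0 : h 0 = 1 := hinit 0 (by norm_num)
  have h1 : h 1 = 1 := hinit 1 le_rfl
  have h2 : h 2 = 2 := by
    have e := hrec 2 le_rfl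
    norm_num [h1, h0] at e
    omega
  -- the growth bound
  have hge : 1 ≤ k → 2*k ≤ h (2*(k:ℤ)) := by
    intro hk1
    match k, hk1 with
    | 1, _ => simpa using h2.ge.trans_eq (by norm_num)
    | (j+2), _ =>
      have e := (IH (j+1) (by omega)).2.2
      -- e : h (2*(j+1)+2) = h ((j+1)+1) + h (2*(j+1))
      have e2 := (IH (j+1) (by omega)).2.1 (by omega)
      have hj2 : 2 ≤ h ((j:ℤ)+2) := by
        rcases Nat.even_or_odd j with ⟨p, hp⟩ | ⟨p, hp⟩
        · have := (IH (p+1) (by omega)).2.1 (by omega)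
          have harg : ((j:ℤ)+2) = 2*((p+1:ℕ):ℤ) := by push_cast [hp]; ring
          rw [harg]; omega
        · have := (IH (p+1) (by omega)).1
          have harg : ((j:ℤ)+2) = 2*((p+1:ℕ):ℤ)+1 := by push_cast [hp]; ring
          rw [harg]; omega
      have harg1 : (2*((j+1:ℕ):ℤ)+2) = 2*((j+2:ℕ):ℤ) := by push_cast; ring
      have harg2 : (((j+1:ℕ):ℤ)+1) = ((j:ℤ)+2) := by push_cast; ring
      rw [harg1, harg2] at e
      push_cast at e e2 ⊢
      omega
  have hodd : h (2*(k:ℤ)+1) = k+1 := by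
    match k with
    | 0 => simpa using h1
    | (j+1) =>
      have hg := hge (by omega)
      have e := hrec (2*((j+1:ℕ):ℤ)+1) (by push_cast; omega)
      have harg : (2*((j+1:ℕ):ℤ)+1 - (h (2*((j+1:ℕ):ℤ)+1-1) : ℤ)) ≤ 1 := by
        have : (2*((j+1:ℕ):ℤ)+1-1) = 2*((j+1:ℕ):ℤ) := by ring
        rw [this]
        push_cast at hg ⊢
        omega
      rw [hinit _ harg] at e
      have harg2 : (2*((j+1:ℕ):ℤ)+1-2) = 2*((j:ℕ):ℤ)+1 := by push_cast; ring
      rw [harg2] at e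
      rw [(IH j (by omega)).1] at e
      omega
  refine ⟨hodd, hge, ?_⟩
  have e := hrec (2*(k:ℤ)+2) (by omega)
  have harg : (2*(k:ℤ)+2-1) = 2*(k:ℤ)+1 := by ring
  rw [harg, hodd] at e
  have harg2 : (2*(k:ℤ)+2 - ((k+1:ℕ):ℤ)) = (k:ℤ)+1 := by push_cast; ring
  rw [harg2] at e
  have harg3 : (2*(k:ℤ)+2-2) = 2*(k:ℤ) := by ring
  rw [harg3] at e
  exact e

section facts
variable (h : ℤ → ℕ)
    (hinit : ∀ n : ℤ, n ≤ 1 → h n = 1)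
    (hrec : ∀ n : ℤ, 2 ≤ n → h n = h (n - (h (n - 1) : ℤ)) + h (n - 2))
    (r : ℕ → ℕ) (hr : ∀ n : ℕ, r n = h n % 2)

include hinit hrec hr

lemma rodd : ∀ n : ℕ, r (2*n+1) = (n+1) % 2 := by
  intro n
  have e := (keyA h hinit hrec n).1
  rw [hr]
  have : ((2*n+1 : ℕ) : ℤ) = 2*(n:ℤ)+1 := by push_cast; ring
  rw [this, e]

lemma rE1 : ∀ m : ℕ, r (4*m+2) = (m + 1 + r (4*m)) % 2 := by
  intro m
  have e := (keyA h hinit hrec (2*m)).2.2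
  have eo := (keyA h hinit hrec m).1
  have a1 : (2*((2*m:ℕ):ℤ)+2) = ((4*m+2 : ℕ) : ℤ) := by push_cast; ring
  have a2 : (((2*m:ℕ):ℤ)+1) = 2*(m:ℤ)+1 := by push_cast; ring
  have a3 : (2*((2*m:ℕ):ℤ)) = ((4*m : ℕ) : ℤ) := by push_cast; ring
  rw [a1, a2, a3, eo] at e
  rw [hr, hr, e]
  omega

lemma rE2 : ∀ m : ℕ, r (4*m+4) = (r (2*m+2) + r (4*m+2)) % 2 := by
  intro m
  have e := (keyA h hinit hrec (2*m+1)).2.2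
  have a1 : (2*((2*m+1:ℕ):ℤ)+2) = ((4*m+4 : ℕ) : ℤ) := by push_cast; ring
  have a2 : (((2*m+1:ℕ):ℤ)+1) = ((2*m+2 : ℕ) : ℤ) := by push_cast; ring
  have a3 : (2*((2*m+1:ℕ):ℤ)) = ((4*m+2 : ℕ) : ℤ) := by push_cast; ring
  rw [a1, a2, a3] at e
  rw [hr, hr, hr, e]
  omega

omit hrec in
lemma rzero : r 0 = 1 := by
  rw [hr]; norm_num [hinit 0 (by norm_num)]

end facts


lemma master (r : ℕ → ℕ) (hlt : ∀ n, r n < 2)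
    (e1 : ∀ m, r (4*m+2) = (m + 1 + r (4*m)) % 2)
    (e2 : ∀ m, r (4*m+4) = (r (2*m+2) + r (4*m+2)) % 2)
    (r0 : r 0 = 1) :
    ∀ m : ℕ,
      (m % 2 = 0 → r (16*m) = r (8*m)) ∧
      (m % 2 = 1 → r (16*m) = 1 - ((m/2) % 4)/2) ∧
      r (16*m+2) = (1 + r (16*m)) % 2 ∧
      r (16*m+4) = m % 2 ∧
      r (16*m+6) = m % 2 ∧
      r (16*m+8) = (m % 4)/2 ∧
      r (16*m+10) = 1 - (m % 4)/2 ∧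
      r (16*m+12) = (m+1) % 2 ∧
      r (16*m+14) = (m+1) % 2 := by
  intro m
  induction m using Nat.strong_induction_on with
  | _ m IH =>
  rcases m with _ | j
  · have w2 : r 2 = 0 := by have := e1 0; norm_num at this; omega
    have w4 : r 4 = 0 := by have := e2 0; norm_num at this; omega
    have w6 : r 6 = 0 := by have := e1 1; norm_num at this; omega
    have w8 : r 8 = 0 := by have := e2 1; norm_num at this; omega
    have w10 : r 10 = 1 := by have := e1 2; norm_num at this; omega
    have w12 : r 12 = 1 := by have := e2 2; norm_num at this; omega
    have w14 : r 14 = 1 := by have := e1 3; norm_num at this; omega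
    norm_num
    exact ⟨by omega, w4, w6, w8, w10, w12, w14⟩
  · set m := j + 1 with hm
    have hm1 : 1 ≤ m := by omega
    -- the crucial low-block facts
    have F1 : r (16*m-2) = m % 2 := by
      have t := (IH j (by omega)).2.2.2.2.2.2.2.2
      rw [show 16*m-2 = 16*j+14 from by omega, t]
    have F0 : r (16*m) = (r (8*m) + r (16*m-2)) % 2 := by
      have E := e2 (4*m-1)
      rw [show 4*(4*m-1)+4 = 16*m from by omega, show 2*(4*m-1)+2 = 8*m from by omega,
        show 4*(4*m-1)+2 = 16*m-2 from by omega] at E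
      exact E
    rcases Nat.even_or_odd m with ⟨p, hp0⟩ | ⟨p, hp0⟩
    -- EVEN case
    · have hp : m = 2*p := by omega
      clear hp0
      have c0 : r (16*m) = r (8*m) := by
        have B := hlt (8*m); omega
      have c0' : m % 2 = 1 → r (16*m) = 1 - ((m/2) % 4)/2 := by
        intro hc; omega
      clear F0 F1
      have c1 : r (16*m+2) = (1 + r (16*m)) % 2 := by
        have E := e1 (4*m)
        rw [show 4*(4*m)+2 = 16*m+2 from by ring, show 4*(4*m) = 16*m from by ring] at E
        omega
      have c2 : r (16*m+4) = m % 2 := by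
        have E := e2 (4*m)
        rw [show 4*(4*m)+4 = 16*m+4 from by ring, show 2*(4*m)+2 = 8*m+2 from by ring,
          show 4*(4*m)+2 = 16*m+2 from by ring] at E
        have G1 : r (8*m+2) = (1 + r (16*p)) % 2 := by
          rw [show 8*m+2 = 16*p+2 from by omega]
          exact (IH p (by omega)).2.2.1
        have c0'' : r (16*m) = r (16*p) := by
          rw [c0, show 8*m = 16*p from by omega]
        have B := hlt (16*p)
        clear c0 c0'
        omega
      have c3 : r (16*m+6) = m % 2 := by
        have E := e1 (4*m+1)
        rw [show 4*(4*m+1)+2 = 16*m+6 from by ring, show 4*(4*m+1) = 16*m+4 from by ring] at E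
        clear c0 c0' c1
        omega
      have c4 : r (16*m+8) = (m % 4)/2 := by
        have E := e2 (4*m+1)
        rw [show 4*(4*m+1)+4 = 16*m+8 from by ring, show 2*(4*m+1)+2 = 8*m+4 from by ring,
          show 4*(4*m+1)+2 = 16*m+6 from by ring] at E
        have G2 : r (8*m+4) = p % 2 := by
          rw [show 8*m+4 = 16*p+4 from by omega]
          exact (IH p (by omega)).2.2.2.1
        clear c0 c0' c1 c2
        omega
      have c5 : r (16*m+10) = 1 - (m % 4)/2 := by
        have E := e1 (4*m+2)
        rw [show 4*(4*m+2)+2 = 16*m+10 from by ring, show 4*(4*m+2) = 16*m+8 from by ring] at E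
        have B := hlt (16*m+8)
        clear c0 c0' c1 c2 c3
        omega
      have c6 : r (16*m+12) = (m+1) % 2 := by
        have E := e2 (4*m+2)
        rw [show 4*(4*m+2)+4 = 16*m+12 from by ring, show 2*(4*m+2)+2 = 8*m+6 from by ring,
          show 4*(4*m+2)+2 = 16*m+10 from by ring] at E
        have G3 : r (8*m+6) = p % 2 := by
          rw [show 8*m+6 = 16*p+6 from by omega]
          exact (IH p (by omega)).2.2.2.2.1
        clear c0 c0' c1 c2 c3 c4
        omega
      have c7 : r (16*m+14) = (m+1) % 2 := by
        have E := e1 (4*m+3)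
        rw [show 4*(4*m+3)+2 = 16*m+14 from by ring, show 4*(4*m+3) = 16*m+12 from by ring] at E
        clear c0 c0' c1 c2 c3 c4 c5
        omega
      exact ⟨fun _ => c0, c0', c1, c2, c3, c4, c5, c6, c7⟩
    -- ODD case
    · have hp : m = 2*p+1 := by omega
      clear hp0
      have G0 : r (8*m) = (p % 4)/2 := by
        rw [show 8*m = 16*p+8 from by omega]
        exact (IH p (by omega)).2.2.2.2.2.1
      have c0 : m % 2 = 0 → r (16*m) = r (8*m) := by
        intro hc; omega
      have c0' : r (16*m) = 1 - ((m/2) % 4)/2 := by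
        have B := hlt (8*m)
        omega
      clear F0 F1
      have c1 : r (16*m+2) = (1 + r (16*m)) % 2 := by
        have E := e1 (4*m)
        rw [show 4*(4*m)+2 = 16*m+2 from by ring, show 4*(4*m) = 16*m from by ring] at E
        clear c0 c0' G0
        omega
      have c2 : r (16*m+4) = m % 2 := by
        have E := e2 (4*m)
        rw [show 4*(4*m)+4 = 16*m+4 from by ring, show 2*(4*m)+2 = 8*m+2 from by ring,
          show 4*(4*m)+2 = 16*m+2 from by ring] at E
        have G1 : r (8*m+2) = 1 - (p % 4)/2 := by
          rw [show 8*m+2 = 16*p+10 from by omega]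
          exact (IH p (by omega)).2.2.2.2.2.2.1
        clear c0 G0
        omega
      have c3 : r (16*m+6) = m % 2 := by
        have E := e1 (4*m+1)
        rw [show 4*(4*m+1)+2 = 16*m+6 from by ring, show 4*(4*m+1) = 16*m+4 from by ring] at E
        clear c0 c0' c1 G0
        omega
      have c4 : r (16*m+8) = (m % 4)/2 := by
        have E := e2 (4*m+1)
        rw [show 4*(4*m+1)+4 = 16*m+8 from by ring, show 2*(4*m+1)+2 = 8*m+4 from by ring,
          show 4*(4*m+1)+2 = 16*m+6 from by ring] at E
        have G2 : r (8*m+4) = (p+1) % 2 := by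
          rw [show 8*m+4 = 16*p+12 from by omega]
          exact (IH p (by omega)).2.2.2.2.2.2.2.1
        clear c0 c0' c1 c2 G0
        omega
      have c5 : r (16*m+10) = 1 - (m % 4)/2 := by
        have E := e1 (4*m+2)
        rw [show 4*(4*m+2)+2 = 16*m+10 from by ring, show 4*(4*m+2) = 16*m+8 from by ring] at E
        have B := hlt (16*m+8)
        clear c0 c0' c1 c2 c3 G0
        omega
      have c6 : r (16*m+12) = (m+1) % 2 := by
        have E := e2 (4*m+2)
        rw [show 4*(4*m+2)+4 = 16*m+12 from by ring, show 2*(4*m+2)+2 = 8*m+6 from by ring,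
          show 4*(4*m+2)+2 = 16*m+10 from by ring] at E
        have G3 : r (8*m+6) = (p+1) % 2 := by
          rw [show 8*m+6 = 16*p+14 from by omega]
          exact (IH p (by omega)).2.2.2.2.2.2.2.2
        clear c0 c0' c1 c2 c3 c4 G0
        omega
      have c7 : r (16*m+14) = (m+1) % 2 := by
        have E := e1 (4*m+3)
        rw [show 4*(4*m+3)+2 = 16*m+14 from by ring, show 4*(4*m+3) = 16*m+12 from by ring] at E
        clear c0 c0' c1 c2 c3 c4 c5 G0
        omega
      exact ⟨c0, fun _ => c0', c1, c2, c3, c4, c5, c6, c7⟩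


def K (r : ℕ → ℕ) : Set (ℕ → ℕ) :=
  {fun n => r n, fun n => r (2*n), fun n => r (2*n+1), fun n => r (4*n), fun n => r (4*n+1),
   fun n => r (4*n+2), fun n => r (4*n+3), fun n => r (8*n), fun n => r (8*n+2),
   fun n => r (8*n+4), fun n => r (16*n), fun n => r (16*n+2), fun n => r (16*n+4),
   fun n => r (16*n+8), fun n => r (16*n+10)}

lemma closureK (r : ℕ → ℕ)
    (ro : ∀ n, r (2*n+1) = (n+1) % 2)
    (M : ∀ m : ℕ,
      (m % 2 = 0 → r (16*m) = r (8*m)) ∧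
      (m % 2 = 1 → r (16*m) = 1 - ((m/2) % 4)/2) ∧
      r (16*m+2) = (1 + r (16*m)) % 2 ∧
      r (16*m+4) = m % 2 ∧
      r (16*m+6) = m % 2 ∧
      r (16*m+8) = (m % 4)/2 ∧
      r (16*m+10) = 1 - (m % 4)/2 ∧
      r (16*m+12) = (m+1) % 2 ∧
      r (16*m+14) = (m+1) % 2) :
    ∀ f ∈ K r, ∀ b, b < 2 → (fun n => f (2*n+b)) ∈ K r := by
  intro f hf b hb
  simp only [K, Set.mem_insert_iff, Set.mem_singleton_iff] at hf ⊢
  have hb2 : b = 0 ∨ b = 1 := by omega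
  rcases hf with rfl|rfl|rfl|rfl|rfl|rfl|rfl|rfl|rfl|rfl|rfl|rfl|rfl|rfl|rfl <;> rcases hb2 with rfl|rfl
  · refine Or.inr (Or.inl ?_)
    funext n; show r ((2*n+0)) = r (2*n)
    exact congrArg r (by ring)
  · refine Or.inr (Or.inr (Or.inl ?_))
    funext n; show r ((2*n+1)) = r (2*n+1)
    exact congrArg r (by ring)
  · refine Or.inr (Or.inr (Or.inr (Or.inl ?_)))
    funext n; show r (2*(2*n+0)) = r (4*n)
    exact congrArg r (by ring)
  · refine Or.inr (Or.inr (Or.inr (Or.inr (Or.inr (Or.inl ?_)))))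
    funext n; show r (2*(2*n+1)) = r (4*n+2)
    exact congrArg r (by ring)
  · refine Or.inr (Or.inr (Or.inr (Or.inr (Or.inl ?_))))
    funext n; show r (2*(2*n+0)+1) = r (4*n+1)
    exact congrArg r (by ring)
  · refine Or.inr (Or.inr (Or.inr (Or.inr (Or.inr (Or.inr (Or.inl ?_))))))
    funext n; show r (2*(2*n+1)+1) = r (4*n+3)
    exact congrArg r (by ring)
  · refine Or.inr (Or.inr (Or.inr (Or.inr (Or.inr (Or.inr (Or.inr (Or.inl ?_)))))))
    funext n; show r (4*(2*n+0)) = r (8*n)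
    exact congrArg r (by ring)
  · refine Or.inr (Or.inr (Or.inr (Or.inr (Or.inr (Or.inr (Or.inr (Or.inr (Or.inr (Or.inl ?_)))))))))
    funext n; show r (4*(2*n+1)) = r (8*n+4)
    exact congrArg r (by ring)
  · refine Or.inr (Or.inr (Or.inr (Or.inr (Or.inl ?_))))
    funext n; show r (4*(2*n+0)+1) = r (4*n+1)
    have t0 := ro (4*n)
    rw [show 2*(4*n)+1 = 8*n+1 from by ring] at t0
    have t1 := ro (2*n)
    rw [show 2*(2*n)+1 = 4*n+1 from by ring] at t1
    rw [show 4*(2*n+0)+1 = 8*n+1 from by ring]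
    omega
  · refine Or.inr (Or.inr (Or.inr (Or.inr (Or.inl ?_))))
    funext n; show r (4*(2*n+1)+1) = r (4*n+1)
    have t0 := ro (4*n+2)
    rw [show 2*(4*n+2)+1 = 8*n+5 from by ring] at t0
    have t1 := ro (2*n)
    rw [show 2*(2*n)+1 = 4*n+1 from by ring] at t1
    rw [show 4*(2*n+1)+1 = 8*n+5 from by ring]
    omega
  · refine Or.inr (Or.inr (Or.inr (Or.inr (Or.inr (Or.inr (Or.inr (Or.inr (Or.inl ?_))))))))
    funext n; show r (4*(2*n+0)+2) = r (8*n+2)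
    exact congrArg r (by ring)
  · refine Or.inr (Or.inr (Or.inr (Or.inr (Or.inr (Or.inr (Or.inr (Or.inr (Or.inr (Or.inl ?_)))))))))
    funext n; show r (4*(2*n+1)+2) = r (8*n+4)
    rcases Nat.even_or_odd n with ⟨p, hp⟩ | ⟨p, hp⟩
    · have t0 := (M p).2.2.2.2.1
      have t1 := (M p).2.2.2.1
      rw [show 4*(2*n+1)+2 = 16*p+6 from by omega, show 8*n+4 = 16*p+4 from by omega]
      omega
    · have t0 := (M p).2.2.2.2.2.2.2.2
      have t1 := (M p).2.2.2.2.2.2.2.1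
      rw [show 4*(2*n+1)+2 = 16*p+14 from by omega, show 8*n+4 = 16*p+12 from by omega]
      omega
  · refine Or.inr (Or.inr (Or.inr (Or.inr (Or.inr (Or.inr (Or.inl ?_))))))
    funext n; show r (4*(2*n+0)+3) = r (4*n+3)
    have t0 := ro (4*n+1)
    rw [show 2*(4*n+1)+1 = 8*n+3 from by ring] at t0
    have t1 := ro (2*n+1)
    rw [show 2*(2*n+1)+1 = 4*n+3 from by ring] at t1
    rw [show 4*(2*n+0)+3 = 8*n+3 from by ring]
    omega
  · refine Or.inr (Or.inr (Or.inr (Or.inr (Or.inr (Or.inr (Or.inl ?_))))))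
    funext n; show r (4*(2*n+1)+3) = r (4*n+3)
    have t0 := ro (4*n+3)
    rw [show 2*(4*n+3)+1 = 8*n+7 from by ring] at t0
    have t1 := ro (2*n+1)
    rw [show 2*(2*n+1)+1 = 4*n+3 from by ring] at t1
    rw [show 4*(2*n+1)+3 = 8*n+7 from by ring]
    omega
  · refine Or.inr (Or.inr (Or.inr (Or.inr (Or.inr (Or.inr (Or.inr (Or.inr (Or.inr (Or.inr (Or.inl ?_))))))))))
    funext n; show r (8*(2*n+0)) = r (16*n)
    exact congrArg r (by ring)
  · refine Or.inr (Or.inr (Or.inr (Or.inr (Or.inr (Or.inr (Or.inr (Or.inr (Or.inr (Or.inr (Or.inr (Or.inr (Or.inr (Or.inl ?_)))))))))))))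
    funext n; show r (8*(2*n+1)) = r (16*n+8)
    exact congrArg r (by ring)
  · refine Or.inr (Or.inr (Or.inr (Or.inr (Or.inr (Or.inr (Or.inr (Or.inr (Or.inr (Or.inr (Or.inr (Or.inl ?_)))))))))))
    funext n; show r (8*(2*n+0)+2) = r (16*n+2)
    exact congrArg r (by ring)
  · refine Or.inr (Or.inr (Or.inr (Or.inr (Or.inr (Or.inr (Or.inr (Or.inr (Or.inr (Or.inr (Or.inr (Or.inr (Or.inr (Or.inr (?_))))))))))))))
    funext n; show r (8*(2*n+1)+2) = r (16*n+10)
    exact congrArg r (by ring)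
  · refine Or.inr (Or.inr (Or.inr (Or.inr (Or.inr (Or.inr (Or.inr (Or.inr (Or.inr (Or.inr (Or.inr (Or.inr (Or.inl ?_))))))))))))
    funext n; show r (8*(2*n+0)+4) = r (16*n+4)
    exact congrArg r (by ring)
  · refine Or.inr (Or.inr (Or.inl ?_))
    funext n; show r (8*(2*n+1)+4) = r (2*n+1)
    have t0 := (M n).2.2.2.2.2.2.2.1
    have t1 := ro n
    rw [show 8*(2*n+1)+4 = 16*n+12 from by ring]
    omega
  · refine Or.inr (Or.inr (Or.inr (Or.inr (Or.inr (Or.inr (Or.inr (Or.inr (Or.inr (Or.inr (Or.inl ?_))))))))))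
    funext n; show r (16*(2*n+0)) = r (16*n)
    have t0 := (M (2*n)).1 (by omega)
    rw [show 16*(2*n) = 32*n from by ring, show 8*(2*n) = 16*n from by ring] at t0
    rw [show 16*(2*n+0) = 32*n from by ring]
    omega
  · refine Or.inr (Or.inr (Or.inr (Or.inr (Or.inr (Or.inr (Or.inr (Or.inr (Or.inr (Or.inr (Or.inr (Or.inr (Or.inr (Or.inr (?_))))))))))))))
    funext n; show r (16*(2*n+1)) = r (16*n+10)
    have t0 := (M (2*n+1)).2.1 (by omega)
    rw [show 16*(2*n+1) = 32*n+16 from by ring] at t0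
    have t1 := (M n).2.2.2.2.2.2.1
    rw [show 16*(2*n+1) = 32*n+16 from by ring]
    omega
  · refine Or.inr (Or.inr (Or.inr (Or.inr (Or.inr (Or.inr (Or.inr (Or.inr (Or.inr (Or.inr (Or.inr (Or.inl ?_)))))))))))
    funext n; show r (16*(2*n+0)+2) = r (16*n+2)
    have t0 := (M (2*n)).2.2.1
    rw [show 16*(2*n)+2 = 32*n+2 from by ring, show 16*(2*n) = 32*n from by ring] at t0
    have t1 := (M (2*n)).1 (by omega)
    rw [show 16*(2*n) = 32*n from by ring, show 8*(2*n) = 16*n from by ring] at t1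
    have t2 := (M n).2.2.1
    rw [show 16*(2*n+0)+2 = 32*n+2 from by ring]
    omega
  · refine Or.inr (Or.inr (Or.inr (Or.inr (Or.inr (Or.inr (Or.inr (Or.inr (Or.inr (Or.inr (Or.inr (Or.inr (Or.inr (Or.inl ?_)))))))))))))
    funext n; show r (16*(2*n+1)+2) = r (16*n+8)
    have t0 := (M (2*n+1)).2.2.1
    rw [show 16*(2*n+1)+2 = 32*n+18 from by ring, show 16*(2*n+1) = 32*n+16 from by ring] at t0
    have t1 := (M (2*n+1)).2.1 (by omega)
    rw [show 16*(2*n+1) = 32*n+16 from by ring] at t1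
    have t2 := (M n).2.2.2.2.2.1
    rw [show 16*(2*n+1)+2 = 32*n+18 from by ring]
    omega
  · refine Or.inr (Or.inr (Or.inr (Or.inr (Or.inr (Or.inr (Or.inl ?_))))))
    funext n; show r (16*(2*n+0)+4) = r (4*n+3)
    have t0 := (M (2*n)).2.2.2.1
    rw [show 16*(2*n)+4 = 32*n+4 from by ring] at t0
    have t1 := ro (2*n+1)
    rw [show 2*(2*n+1)+1 = 4*n+3 from by ring] at t1
    rw [show 16*(2*n+0)+4 = 32*n+4 from by ring]
    omega
  · refine Or.inr (Or.inr (Or.inr (Or.inr (Or.inl ?_))))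
    funext n; show r (16*(2*n+1)+4) = r (4*n+1)
    have t0 := (M (2*n+1)).2.2.2.1
    rw [show 16*(2*n+1)+4 = 32*n+20 from by ring] at t0
    have t1 := ro (2*n)
    rw [show 2*(2*n)+1 = 4*n+1 from by ring] at t1
    rw [show 16*(2*n+1)+4 = 32*n+20 from by ring]
    omega
  · refine Or.inr (Or.inr (Or.inr (Or.inr (Or.inr (Or.inr (Or.inr (Or.inr (Or.inr (Or.inr (Or.inr (Or.inr (Or.inl ?_))))))))))))
    funext n; show r (16*(2*n+0)+8) = r (16*n+4)
    have t0 := (M (2*n)).2.2.2.2.2.1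
    rw [show 16*(2*n)+8 = 32*n+8 from by ring] at t0
    have t1 := (M n).2.2.2.1
    rw [show 16*(2*n+0)+8 = 32*n+8 from by ring]
    omega
  · refine Or.inr (Or.inr (Or.inr (Or.inr (Or.inr (Or.inr (Or.inr (Or.inr (Or.inr (Or.inr (Or.inr (Or.inr (Or.inl ?_))))))))))))
    funext n; show r (16*(2*n+1)+8) = r (16*n+4)
    have t0 := (M (2*n+1)).2.2.2.2.2.1
    rw [show 16*(2*n+1)+8 = 32*n+24 from by ring] at t0
    have t1 := (M n).2.2.2.1
    rw [show 16*(2*n+1)+8 = 32*n+24 from by ring]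
    omega
  · refine Or.inr (Or.inr (Or.inl ?_))
    funext n; show r (16*(2*n+0)+10) = r (2*n+1)
    have t0 := (M (2*n)).2.2.2.2.2.2.1
    rw [show 16*(2*n)+10 = 32*n+10 from by ring] at t0
    have t1 := ro n
    rw [show 16*(2*n+0)+10 = 32*n+10 from by ring]
    omega
  · refine Or.inr (Or.inr (Or.inl ?_))
    funext n; show r (16*(2*n+1)+10) = r (2*n+1)
    have t0 := (M (2*n+1)).2.2.2.2.2.2.1
    rw [show 16*(2*n+1)+10 = 32*n+26 from by ring] at t0
    have t1 := ro n
    rw [show 16*(2*n+1)+10 = 32*n+26 from by ring]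
    omega


set_option maxHeartbeats 1000000 in
/-- The sequence `r n = h n mod 2` (with `h = h_{1,1}`) is 2-automatic:
its 2-kernel `{ n ↦ r (2^j n + i) : j ∈ ℕ, 0 ≤ i < 2^j }` is a finite set. -/
theorem stmt9 (h : ℤ → ℕ)
    (hinit : ∀ n : ℤ, n ≤ 1 → h n = 1)
    (hrec : ∀ n : ℤ, 2 ≤ n → h n = h (n - (h (n - 1) : ℤ)) + h (n - 2))
    (r : ℕ → ℕ) (hr : ∀ n : ℕ, r n = h n % 2) :
    Set.Finite {g : ℕ → ℕ | ∃ j i : ℕ, i < 2 ^ j ∧ g = fun n => r (2 ^ j * n + i)} := by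
  have hlt : ∀ n, r n < 2 := fun n => by rw [hr]; exact Nat.mod_lt _ (by norm_num)
  have ro := rodd h hinit hrec r hr
  have e1 := rE1 h hinit hrec r hr
  have e2 := rE2 h hinit hrec r hr
  have r0 := rzero h hinit r hr
  have M := master r hlt e1 e2 r0
  have hfin : (K r).Finite := by
    unfold K
    repeat apply Set.Finite.insert
    exact Set.finite_singleton _
  have main : ∀ j : ℕ, ∀ i : ℕ, i < 2^j → (fun n => r (2^j*n+i)) ∈ K r := by
    intro j
    induction j with
    | zero =>
      intro i hi
      have hi0 : i = 0 := by omega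
      subst hi0
      have e : (fun n => r (2^0*n+0)) = fun n => r n := by
        funext n; exact congrArg r (by norm_num)
      rw [e]
      exact Set.mem_insert _ _
    | succ j IH =>
      intro i hi
      have h2j : 0 < 2^j := by positivity
      have hdiv : i / 2^j < 2 := by
        rw [Nat.div_lt_iff_lt_mul h2j]
        calc i < 2^(j+1) := hi
        _ = 2 * 2^j := by rw [pow_succ]; ring
      have e : (fun n => r (2^(j+1)*n+i)) = fun n => (fun m => r (2^j*m + i % 2^j)) (2*n + i / 2^j) := by
        funext n
        refine congrArg r ?_
        conv_lhs => rw [← Nat.div_add_mod i (2^j)]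
        rw [pow_succ]; ring
      rw [e]
      exact closureK r ro M _ (IH (i % 2^j) (Nat.mod_lt _ h2j)) _ hdiv
  apply Set.Finite.subset hfin
  rintro g ⟨j, i, hij, rfl⟩
  exact main j i hij
end

section
/- Let h = h_{1,1} be as defined and let r(n) = h(n) mod 2. Then (r(8n+4))_{n∈ℕ} is periodic with period 4 and values 0,1,1,0 (i.e., r(8n+4) equals 0,1,1,0 according as n ≡ 0,1,2,3 mod 4), and (r(16n+8))_{n∈ℕ} is periodic with period 4 and values 0,0,1,1. Moreover, for all n ∈ ℕ: r(8n+2) = 1 - r(8n), r(8n+6) = r(8n+4), r(32n) = r(16n), and r(32n+16) = 1 - r(16n+8). -/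
/-!
Since `h (2k+2) ≥ 2k+2`, the recurrence at the odd argument `2k+3` reaches back to the
initial values, so `h (2k+1) = k+1`; at even arguments it then reads
`h (2k+2) = h (k+1) + h (2k)`. Reduced mod 2, two applications of these identities give
`h (8n+12) ≡ h (8n+4) + n + 1`, hence `h (8n+4) ≡ n(n+1)/2`, and each remaining claim is one
or two further unfoldings of the even identity.
-/

structure IsMetaFib (h : ℤ → ℕ) : Prop where
  init : ∀ n : ℤ, n ≤ 1 → h n = 1
  recurrence : ∀ n : ℤ, 2 ≤ n → h n = h (n - (h (n - 1) : ℤ)) + h (n - 2)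

structure HalvingRecurrence (a : ℕ → ℕ) : Prop where
  odd : ∀ k, a (2 * k + 1) = k + 1
  even : ∀ k, a (2 * k + 2) = a (k + 1) + a (2 * k)

namespace IsMetaFib

variable {h : ℤ → ℕ}

theorem one_le_natCast (hh : IsMetaFib h) (k : ℕ) : 1 ≤ h k := by
  induction k using Nat.strong_induction_on with
  | _ k ih =>
    by_cases hk : k ≤ 1
    · rw [hh.init k (by exact_mod_cast hk)]
    · have hrec := hh.recurrence k (by omega)
      have hprev := ih (k - 2) (by omega)
      rw [Nat.cast_sub (by omega)] at hprev
      push_cast at hprev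
      omega

theorem one_le (hh : IsMetaFib h) (n : ℤ) : 1 ≤ h n := by
  by_cases hn : n ≤ 1
  · rw [hh.init n hn]
  · simpa [Int.toNat_of_nonneg (by omega : 0 ≤ n)] using hh.one_le_natCast n.toNat

theorem two_le (hh : IsMetaFib h) {n : ℤ} (hn : 2 ≤ n) : 2 ≤ h n := by
  rw [hh.recurrence n hn]
  have := hh.one_le (n - h (n - 1))
  have := hh.one_le (n - 2)
  omega

theorem apply_two_mul_add_two (hh : IsMetaFib h) {k : ℕ} (hodd : h (2 * k + 1) = k + 1) :
    h (2 * k + 2) = h (k + 1) + h (2 * k) := by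
  rw [hh.recurrence _ (by omega), show (2 * k + 2 : ℤ) - 1 = 2 * k + 1 by ring, hodd,
    show (2 * k + 2 : ℤ) - 2 = 2 * k by ring]
  congr 2
  push_cast
  ring

theorem apply_two_mul_add_three (hh : IsMetaFib h) {k : ℕ} (hodd : h (2 * k + 1) = k + 1)
    (hbound : 2 * k + 2 ≤ h (2 * k + 2)) : h (2 * k + 3) = k + 2 := by
  rw [hh.recurrence _ (by omega), show (2 * k + 3 : ℤ) - 1 = 2 * k + 2 by ring,
    show (2 * k + 3 : ℤ) - 2 = 2 * k + 1 by ring, hodd, hh.init _ (by omega)]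
  ring

theorem apply_two_mul_add_one_and_le (hh : IsMetaFib h) (k : ℕ) :
    h (2 * k + 1) = k + 1 ∧ 2 * k + 2 ≤ h (2 * k + 2) := by
  induction k with
  | zero =>
    have h1 : h 1 = 1 := hh.init 1 le_rfl
    have h2 := hh.apply_two_mul_add_two (k := 0) (by simpa using h1)
    simp only [CharP.cast_eq_zero, mul_zero, zero_add] at h2 ⊢
    rw [h2, h1, hh.init 0 (by norm_num)]
    simp
  | succ k ih =>
    obtain ⟨hodd, hbound⟩ := ih
    have hodd' : h (2 * ↑(k + 1) + 1) = k + 1 + 1 := by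
      push_cast
      rw [show (2 * (k + 1) + 1 : ℤ) = 2 * k + 3 by ring]
      exact hh.apply_two_mul_add_three hodd hbound
    refine ⟨hodd', ?_⟩
    rw [hh.apply_two_mul_add_two hodd']
    have hmid := hh.two_le (n := ↑(k + 1) + 1) (by omega)
    push_cast at hmid ⊢
    rw [show (2 * (k + 1) : ℤ) = 2 * k + 2 by ring]
    omega

theorem halvingRecurrence (hh : IsMetaFib h) : HalvingRecurrence (fun n : ℕ => h n) where
  odd k := by exact_mod_cast (hh.apply_two_mul_add_one_and_le k).1
  even k := by exact_mod_cast hh.apply_two_mul_add_two (hh.apply_two_mul_add_one_and_le k).1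

end IsMetaFib

namespace HalvingRecurrence

variable {a : ℕ → ℕ}

theorem apply_four_mul_add_two (ha : HalvingRecurrence a) (m : ℕ) :
    a (4 * m + 2) = a (4 * m) + m + 1 := by
  have e := ha.even (2 * m)
  have o := ha.odd m
  ring_nf at e o ⊢
  omega

theorem apply_four_mul_add_four (ha : HalvingRecurrence a) (m : ℕ) :
    a (4 * m + 4) = a (2 * m + 2) + a (4 * m) + m + 1 := by
  have e := ha.even (2 * m + 1)
  have e' := ha.apply_four_mul_add_two m
  ring_nf at e e' ⊢
  omega

theorem apply_eight_mul_add_two_mod_two (ha : HalvingRecurrence a) (n : ℕ) :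
    a (8 * n + 2) % 2 = 1 - a (8 * n) % 2 := by
  have e := ha.apply_four_mul_add_two (2 * n)
  ring_nf at e ⊢
  omega

theorem apply_eight_mul_add_six_mod_two (ha : HalvingRecurrence a) (n : ℕ) :
    a (8 * n + 6) % 2 = a (8 * n + 4) % 2 := by
  have e := ha.apply_four_mul_add_two (2 * n + 1)
  ring_nf at e ⊢
  omega

theorem apply_eight_mul_add_twelve_mod_two (ha : HalvingRecurrence a) (n : ℕ) :
    a (8 * n + 12) % 2 = (a (8 * n + 4) + n + 1) % 2 := by
  have e₁ := ha.apply_four_mul_add_four (2 * n + 2)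
  have e₂ := ha.apply_four_mul_add_four (2 * n + 1)
  have e₃ := ha.apply_four_mul_add_two (n + 1)
  ring_nf at e₁ e₂ e₃ ⊢
  omega

theorem apply_eight_mul_add_four_mod_two (ha : HalvingRecurrence a) (n : ℕ) :
    a (8 * n + 4) % 2 = (n + 1) % 4 / 2 := by
  induction n with
  | zero =>
    have e := ha.even 1
    norm_num at e ⊢
    omega
  | succ n ih =>
    have step := ha.apply_eight_mul_add_twelve_mod_two n
    rw [show 8 * (n + 1) + 4 = 8 * n + 12 by ring]
    rcases (by omega : n % 4 = 0 ∨ n % 4 = 1 ∨ n % 4 = 2 ∨ n % 4 = 3)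
      with hn | hn | hn | hn <;> omega

theorem apply_sixteen_mul_add_eight_mod_two (ha : HalvingRecurrence a) (n : ℕ) :
    a (16 * n + 8) % 2 = n % 4 / 2 := by
  have e := ha.apply_four_mul_add_four (4 * n + 1)
  have p₁ := ha.apply_eight_mul_add_four_mod_two n
  have p₂ := ha.apply_eight_mul_add_four_mod_two (2 * n)
  ring_nf at e p₁ p₂ ⊢
  rcases (by omega : n % 4 = 0 ∨ n % 4 = 1 ∨ n % 4 = 2 ∨ n % 4 = 3)
    with hn | hn | hn | hn <;> omega

theorem apply_thirty_two_mul_mod_two (ha : HalvingRecurrence a) (n : ℕ) :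
    a (32 * n) % 2 = a (16 * n) % 2 := by
  cases n with
  | zero => rfl
  | succ m =>
    have e := ha.apply_four_mul_add_four (8 * m + 7)
    have p := ha.apply_eight_mul_add_four_mod_two (4 * m + 3)
    ring_nf at e p ⊢
    omega

theorem apply_thirty_two_mul_add_sixteen_mod_two (ha : HalvingRecurrence a) (n : ℕ) :
    a (32 * n + 16) % 2 = 1 - a (16 * n + 8) % 2 := by
  have e := ha.apply_four_mul_add_four (8 * n + 3)
  have p := ha.apply_eight_mul_add_four_mod_two (4 * n + 1)
  ring_nf at e p ⊢
  omega

end HalvingRecurrence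

theorem vec_0110_ofNat (n : ℕ) :
    (![0, 1, 1, 0] : Fin 4 → ℕ) (Fin.ofNat 4 n) = (n + 1) % 4 / 2 := by
  have hv : (Fin.ofNat 4 n : ℕ) = n % 4 := Fin.val_ofNat ..
  generalize Fin.ofNat 4 n = i at hv
  fin_cases i <;> simp at hv ⊢ <;> omega

theorem vec_0011_ofNat (n : ℕ) : (![0, 0, 1, 1] : Fin 4 → ℕ) (Fin.ofNat 4 n) = n % 4 / 2 := by
  have hv : (Fin.ofNat 4 n : ℕ) = n % 4 := Fin.val_ofNat ..
  generalize Fin.ofNat 4 n = i at hv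
  fin_cases i <;> simp at hv ⊢ <;> omega

/-- With `r n = h n mod 2` (`h = h_{1,1}`): `(r(8n+4))ₙ` is periodic
with period 4 and values `0,1,1,0`, `(r(16n+8))ₙ` is periodic with period 4 and
values `0,0,1,1`, and moreover `r(8n+2) = 1 - r(8n)`, `r(8n+6) = r(8n+4)`,
`r(32n) = r(16n)` and `r(32n+16) = 1 - r(16n+8)` for all `n`. -/
theorem stmt10 (h : ℤ → ℕ)
    (hinit : ∀ n : ℤ, n ≤ 1 → h n = 1)
    (hrec : ∀ n : ℤ, 2 ≤ n → h n = h (n - (h (n - 1) : ℤ)) + h (n - 2))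
    (r : ℕ → ℕ) (hr : ∀ n : ℕ, r n = h n % 2) :
    (∀ n : ℕ, r (8 * n + 4) = ![0, 1, 1, 0] (Fin.ofNat 4 n)) ∧
    (∀ n : ℕ, r (16 * n + 8) = ![0, 0, 1, 1] (Fin.ofNat 4 n)) ∧
    (∀ n : ℕ, r (8 * n + 2) = 1 - r (8 * n)) ∧
    (∀ n : ℕ, r (8 * n + 6) = r (8 * n + 4)) ∧
    (∀ n : ℕ, r (32 * n) = r (16 * n)) ∧
    (∀ n : ℕ, r (32 * n + 16) = 1 - r (16 * n + 8)) := by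
  have ha := (IsMetaFib.mk hinit hrec).halvingRecurrence
  simp only [hr, vec_0110_ofNat, vec_0011_ofNat]
  exact ⟨ha.apply_eight_mul_add_four_mod_two, ha.apply_sixteen_mul_add_eight_mod_two,
    ha.apply_eight_mul_add_two_mod_two, ha.apply_eight_mul_add_six_mod_two,
    ha.apply_thirty_two_mul_mod_two, ha.apply_thirty_two_mul_add_sixteen_mod_two⟩
end

section
/- Let b ≥ 2 be an integer and H_b(X) = ∑_{n=0}^{∞} h_{1,b}(n) X^n ∈ ℤ[[X]]. Then H_b satisfies the functional equation H_b(X) = X · (1 - X²)⁻¹ · H_b(X²) + (b-1) X · (1 - X²)⁻¹ + ((1 - X²)⁻¹)², where (1 - X²)⁻¹ is the multiplicative inverse of the unit 1 - X² in ℤ[[X]] and H_b(X²) denotes the substitution of X² into H_b. -/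
/-!
For `b ≥ 2`, strong induction gives `h (2n) = n + 1` and `h (2n+1) ≥ 2n + 2`: the bound makes the
recurrence at `2n + 2` jump back into the constant region `n ≤ 0`, and the even values then turn
the recurrence at `2n + 3` into `h (2n+3) = h (n+1) + h (2n+1)`. Hence the coefficients of
`(1 - X²) H_b` are `1, b`, then `1` at even and `h (n+1)` at odd indices `2n + 3`, which are those
of `X H_b(X²) + (b - 1) X + (1 - X²)⁻¹`.
-/

open PowerSeries

section OneSubXSq

variable {R : Type*} [CommRing R]

theorem coeff_one_sub_X_sq_mul_add_two (F : PowerSeries R) (n : ℕ) :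
    coeff (n + 2) ((1 - X ^ 2) * F) = coeff (n + 2) F - coeff n F := by
  rw [sub_mul, one_mul, map_sub, coeff_X_pow_mul]

theorem coeff_one_sub_X_sq_mul_of_lt_two (F : PowerSeries R) {n : ℕ} (hn : n < 2) :
    coeff n ((1 - X ^ 2) * F) = coeff n F := by
  rw [sub_mul, one_mul, map_sub, coeff_X_pow_mul', if_neg (by omega), sub_zero]

theorem coeff_eq_ite_even_of_one_sub_X_sq_mul_eq_one {U : PowerSeries R}
    (hU : (1 - X ^ 2) * U = 1) (n : ℕ) : coeff n U = if Even n then 1 else 0 := by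
  induction n using Nat.twoStepInduction with
  | zero => rw [← coeff_one_sub_X_sq_mul_of_lt_two U (by norm_num), hU]; simp
  | one => rw [← coeff_one_sub_X_sq_mul_of_lt_two U (by norm_num), hU]; simp
  | more n ih _ =>
    have h2 := coeff_one_sub_X_sq_mul_add_two U n
    rw [hU, coeff_one, if_neg (by omega), eq_comm, sub_eq_zero] at h2
    rw [h2, ih]
    simp [Nat.even_add]

end OneSubXSq

structure IsMetaFibonacci_s12 (a b : ℕ) (h : ℤ → ℕ) : Prop where
  apply_of_nonpos : ∀ n : ℤ, n ≤ 0 → h n = a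
  apply_one : h 1 = b
  apply_of_two_le : ∀ n : ℤ, 2 ≤ n → h n = h (n - h (n - 1)) + h (n - 2)

namespace IsMetaFibonacci_s12

variable {a b : ℕ} {h : ℤ → ℕ}

theorem apply_eq_add_of_le_apply_sub_one (hh : IsMetaFibonacci_s12 a b h) {m : ℤ} (hm : 2 ≤ m)
    (hle : m ≤ h (m - 1)) : h m = a + h (m - 2) := by
  rw [hh.apply_of_two_le m hm, hh.apply_of_nonpos _ (by omega)]

theorem apply_two_mul_eq_and_le_apply_two_mul_add_one (hh : IsMetaFibonacci_s12 1 b h)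
    (hb : 2 ≤ b) (n : ℕ) : h (2 * n) = n + 1 ∧ 2 * n + 2 ≤ h (2 * n + 1) := by
  induction n using Nat.strong_induction_on with
  | _ n ih =>
    rcases n with _ | m
    · simpa [hh.apply_of_nonpos 0 le_rfl, hh.apply_one] using hb
    obtain ⟨even_m, odd_m⟩ := ih m (Nat.lt_succ_self m)
    have even_succ : h (2 * m + 2) = m + 2 := by
      have hle : (2 * m + 2 : ℤ) ≤ h (2 * m + 2 - 1) := by
        rw [show (2 * m + 2 - 1 : ℤ) = 2 * m + 1 by ring]; omega
      rw [hh.apply_eq_add_of_le_apply_sub_one (by omega) hle,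
        show (2 * m + 2 - 2 : ℤ) = 2 * m by ring, even_m]
      ring
    have two_le_half : 2 ≤ h (m + 1) := by
      obtain ⟨j, hj | hj⟩ := Nat.even_or_odd' (m + 1)
      · have := (ih j (by omega)).1
        rw [show (m + 1 : ℤ) = 2 * j by exact_mod_cast hj, this]
        omega
      · have := (ih j (by omega)).2
        rw [show (m + 1 : ℤ) = 2 * j + 1 by exact_mod_cast hj]
        omega
    have odd_succ : h (2 * m + 3) = h (m + 1) + h (2 * m + 1) := by
      rw [hh.apply_of_two_le _ (by omega), show (2 * m + 3 - 1 : ℤ) = 2 * m + 2 by ring,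
        even_succ]
      congr 2 <;> push_cast <;> ring
    push_cast
    rw [show (2 * (m + 1) : ℤ) = 2 * m + 2 by ring, show (2 * m + 2 + 1 : ℤ) = 2 * m + 3 by ring,
      even_succ, odd_succ]
    omega

theorem apply_two_mul_s12 (hh : IsMetaFibonacci_s12 1 b h) (hb : 2 ≤ b) (n : ℕ) : h (2 * n) = n + 1 :=
  (hh.apply_two_mul_eq_and_le_apply_two_mul_add_one hb n).1

theorem apply_two_mul_add_three (hh : IsMetaFibonacci_s12 1 b h) (hb : 2 ≤ b) (n : ℕ) :
    h (2 * n + 3) = h (n + 1) + h (2 * n + 1) := by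
  have := hh.apply_two_mul_s12 hb (n + 1)
  push_cast at this
  rw [hh.apply_of_two_le _ (by omega), show (2 * n + 3 - 1 : ℤ) = 2 * (n + 1) by ring, this]
  congr 2 <;> push_cast <;> ring

theorem one_sub_X_sq_mul_eq (hh : IsMetaFibonacci_s12 1 b h) (hb : 2 ≤ b) {H U H2 : PowerSeries ℤ}
    (hH : ∀ n : ℕ, coeff n H = h n) (hU : (1 - X ^ 2) * U = 1)
    (hH2e : ∀ n : ℕ, coeff (2 * n) H2 = h n) (hH2o : ∀ n : ℕ, coeff (2 * n + 1) H2 = 0) :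
    (1 - X ^ 2) * H = X * H2 + C ((b : ℤ) - 1) * X + U := by
  ext n
  rw [map_add, map_add, coeff_C_mul, coeff_X, coeff_eq_ite_even_of_one_sub_X_sq_mul_eq_one hU]
  obtain ⟨k, rfl | rfl⟩ := Nat.even_or_odd' n
  · rw [if_pos (even_two_mul k)]
    rcases k with _ | k
    · rw [mul_zero, coeff_one_sub_X_sq_mul_of_lt_two _ (by norm_num), coeff_zero_X_mul, hH]
      simp [hh.apply_of_nonpos 0 le_rfl]
    · rw [mul_add, mul_one, coeff_one_sub_X_sq_mul_add_two, coeff_succ_X_mul, hH2o, hH, hH]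
      push_cast
      rw [show (2 * k + 2 : ℤ) = 2 * (k + 1 : ℕ) by push_cast; ring, hh.apply_two_mul_s12 hb,
        hh.apply_two_mul_s12 hb]
      simp
  · rw [if_neg (Nat.not_even_two_mul_add_one k)]
    rcases k with _ | k
    · rw [mul_zero, zero_add, coeff_one_sub_X_sq_mul_of_lt_two _ (by norm_num), coeff_succ_X_mul,
        ← mul_zero 2, hH2e, hH]
      simp [hh.apply_of_nonpos 0 le_rfl, hh.apply_one]
    · rw [mul_add, mul_one, coeff_one_sub_X_sq_mul_add_two, coeff_succ_X_mul, ← mul_add_one,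
        hH2e, hH, hH]
      push_cast
      rw [show (2 * k + 1 + 2 : ℤ) = 2 * k + 3 by ring, hh.apply_two_mul_add_three hb]
      simp

end IsMetaFibonacci_s12

/-- For `b ≥ 2`, the generating function `H_b(X) = ∑ h_{1,b}(n) Xⁿ`
in `ℤ[[X]]` satisfies
`H_b(X) = X (1-X²)⁻¹ H_b(X²) + (b-1) X (1-X²)⁻¹ + ((1-X²)⁻¹)²`.
Here `U` is the multiplicative inverse of the unit `1 - X²` in `ℤ[[X]]` and `H2`
is the substitution `H_b(X²)`, characterized by its coefficients. -/
theorem stmt12 (b : ℕ) (hb : 2 ≤ b) (h : ℤ → ℕ)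
    (hneg : ∀ n : ℤ, n ≤ 0 → h n = 1) (hone : h 1 = b)
    (hrec : ∀ n : ℤ, 2 ≤ n → h n = h (n - (h (n - 1) : ℤ)) + h (n - 2))
    (H : PowerSeries ℤ) (hH : ∀ n : ℕ, PowerSeries.coeff (R := ℤ) n H = (h n : ℤ))
    (U : PowerSeries ℤ) (hU : (1 - PowerSeries.X ^ 2) * U = 1)
    (H2 : PowerSeries ℤ)
    (hH2e : ∀ n : ℕ, PowerSeries.coeff (R := ℤ) (2 * n) H2 = (h n : ℤ))
    (hH2o : ∀ n : ℕ, PowerSeries.coeff (R := ℤ) (2 * n + 1) H2 = 0) :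
    H = PowerSeries.X * U * H2 +
        PowerSeries.C (R := ℤ) ((b : ℤ) - 1) * PowerSeries.X * U + U ^ 2 := by
  have hh : IsMetaFibonacci_s12 1 b h := ⟨hneg, hone, hrec⟩
  calc H = U * ((1 - X ^ 2) * H) := by rw [← mul_assoc, mul_comm U, hU, one_mul]
    _ = _ := by rw [hh.one_sub_X_sq_mul_eq hb hH hU hH2e hH2o]; ring
end

section
/- Let h_{1,1}, h_{1,2} and, for b ≥ 2, h_{1,b} be as defined, and let bin be the binary partition function. Then h_{1,2}(n) = h_{1,1}(n+1) for all n ∈ ℕ, and more generally, for every integer b ≥ 2 and every n ∈ ℕ, h_{1,b}(2n+1) = (b-2)·bin(n+1) + h_{1,1}(2n+2). -/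
lemma stmt14_aux1 (h11 : ℤ → ℕ)
    (h11init : ∀ n : ℤ, n ≤ 1 → h11 n = 1)
    (h11rec : ∀ n : ℤ, 2 ≤ n → h11 n = h11 (n - (h11 (n - 1) : ℤ)) + h11 (n - 2)) :
    ∀ n : ℕ, h11 (2 * n + 1) = n + 1 ∧
      h11 (2 * n + 2) = h11 ((n : ℤ) + 1) + h11 (2 * n) ∧
      2 * n + 2 ≤ h11 (2 * n + 2) := by
  intro n
  induction n using Nat.strong_induction_on with
  | _ n ih =>
    rcases Nat.eq_zero_or_pos n with h0 | h1
    · subst h0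
      have e1 : h11 1 = 1 := h11init 1 le_rfl
      have e0 : h11 0 = 1 := h11init 0 (by norm_num)
      have e2 : h11 2 = 2 := by
        have := h11rec 2 le_rfl
        norm_num [e1, e0] at this
        omega
      norm_num [e1, e0, e2]
    · obtain ⟨m, rfl⟩ : ∃ m, n = m + 1 := ⟨n - 1, by omega⟩
      obtain ⟨ha, hb, hc⟩ := ih m (by omega)
      have c1 : (2 * ((m + 1 : ℕ) : ℤ) + 1) = 2 * (m : ℤ) + 3 := by push_cast; ring
      have c2 : (2 * ((m + 1 : ℕ) : ℤ) + 2) = 2 * (m : ℤ) + 4 := by push_cast; ring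
      have c3 : (((m + 1 : ℕ) : ℤ) + 1) = (m : ℤ) + 2 := by push_cast; ring
      have c4 : (2 * ((m + 1 : ℕ) : ℤ)) = 2 * (m : ℤ) + 2 := by push_cast; ring
      rw [c1, c2, c3, c4]
      -- key1 : h11 (2m+3) = m+2
      have key1 : h11 (2 * (m : ℤ) + 3) = m + 2 := by
        have hr := h11rec (2 * (m : ℤ) + 3) (by omega)
        have e1 : (2 * (m : ℤ) + 3 - 1) = 2 * m + 2 := by ring
        rw [e1] at hr
        have hsmall : (2 * (m : ℤ) + 3 - (h11 (2 * m + 2) : ℤ)) ≤ 1 := by omega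
        rw [h11init _ hsmall] at hr
        have e2 : (2 * (m : ℤ) + 3 - 2) = 2 * m + 1 := by ring
        rw [e2, ha] at hr
        omega
      refine ⟨by omega, ?_⟩
      -- key2 : h11 (2m+4) = h11 (m+2) + h11 (2m+2)
      have key2 : h11 (2 * (m : ℤ) + 4) = h11 ((m : ℤ) + 2) + h11 (2 * (m : ℤ) + 2) := by
        have hr := h11rec (2 * (m : ℤ) + 4) (by omega)
        have e1 : (2 * (m : ℤ) + 4 - 1) = 2 * m + 3 := by ring
        rw [e1, key1] at hr
        have e2 : (2 * (m : ℤ) + 4 - ((m + 2 : ℕ) : ℤ)) = (m : ℤ) + 2 := by push_cast; ring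
        rw [e2] at hr
        have e3 : (2 * (m : ℤ) + 4 - 2) = 2 * m + 2 := by ring
        rw [e3] at hr
        exact hr
      refine ⟨key2, ?_⟩
      have hge2 : 2 ≤ h11 ((m : ℤ) + 2) := by
        rcases Nat.even_or_odd m with ⟨k, hk⟩ | ⟨k, hk⟩
        · have := (ih k (by omega)).2.2
          have e : ((m : ℤ) + 2) = 2 * (k : ℤ) + 2 := by subst hk; push_cast; ring
          rw [e]; omega
        · have := (ih (k + 1) (by omega)).1
          have e : ((m : ℤ) + 2) = 2 * ((k + 1 : ℕ) : ℤ) + 1 := by subst hk; push_cast; ring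
          rw [e, this]; omega
      omega

lemma stmt14_aux2 (h11 : ℤ → ℕ)
    (h11init : ∀ n : ℤ, n ≤ 1 → h11 n = 1)
    (h11rec : ∀ n : ℤ, 2 ≤ n → h11 n = h11 (n - (h11 (n - 1) : ℤ)) + h11 (n - 2))
    (bin : ℕ → ℕ) (hbin0 : bin 0 = 1)
    (hbine : ∀ n : ℕ, 1 ≤ n → bin (2 * n) = bin (2 * n - 1) + bin n)
    (hbino : ∀ n : ℕ, bin (2 * n + 1) = bin (2 * n))
    (b : ℕ) (hb : 2 ≤ b) (h : ℤ → ℕ)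
    (hneg : ∀ n : ℤ, n ≤ 0 → h n = 1) (hone : h 1 = b)
    (hrec : ∀ n : ℤ, 2 ≤ n → h n = h (n - (h (n - 1) : ℤ)) + h (n - 2)) :
    ∀ n : ℕ, h (2 * n) = n + 1 ∧
      h (2 * n + 1) = (b - 2) * bin (n + 1) + h11 (2 * n + 2) := by
  have H := stmt14_aux1 h11 h11init h11rec
  have hbin1 : bin 1 = 1 := by have := hbino 0; simpa [hbin0] using this
  have h112 : h11 2 = 2 := by
    have e1 : h11 1 = 1 := h11init 1 le_rfl
    have e0 : h11 0 = 1 := h11init 0 (by norm_num)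
    have := h11rec 2 le_rfl
    norm_num [e1, e0] at this
    omega
  intro n
  induction n using Nat.strong_induction_on with
  | _ n ih =>
    rcases Nat.eq_zero_or_pos n with h0 | h1
    · subst h0
      refine ⟨by norm_num [hneg 0 le_rfl], ?_⟩
      have e : (2 * ((0 : ℕ) : ℤ) + 1) = 1 := by norm_num
      have e2 : (2 * ((0 : ℕ) : ℤ) + 2) = 2 := by norm_num
      rw [e, e2, hone, hbin1, h112]
      omega
    · obtain ⟨m, rfl⟩ : ∃ m, n = m + 1 := ⟨n - 1, by omega⟩
      obtain ⟨ha, hb'⟩ := ih m (by omega)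
      have c1 : (2 * ((m + 1 : ℕ) : ℤ)) = 2 * (m : ℤ) + 2 := by push_cast; ring
      have c2 : (2 * ((m + 1 : ℕ) : ℤ) + 1) = 2 * (m : ℤ) + 3 := by push_cast; ring
      have c3 : (2 * ((m + 1 : ℕ) : ℤ) + 2) = 2 * (m : ℤ) + 4 := by push_cast; ring
      rw [c2, c3, c1]
      have hlow : 2 * m + 2 ≤ h (2 * (m : ℤ) + 1) := by
        have := (H m).2.2
        omega
      -- even step
      have keyA : h (2 * (m : ℤ) + 2) = m + 2 := by
        have hr := hrec (2 * (m : ℤ) + 2) (by omega)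
        have e1 : (2 * (m : ℤ) + 2 - 1) = 2 * m + 1 := by ring
        rw [e1] at hr
        have hsmall : (2 * (m : ℤ) + 2 - (h (2 * m + 1) : ℤ)) ≤ 0 := by omega
        rw [hneg _ hsmall] at hr
        have e2 : (2 * (m : ℤ) + 2 - 2) = 2 * m := by ring
        rw [e2, ha] at hr
        omega
      refine ⟨by omega, ?_⟩
      -- odd step : h (2m+3) = h (m+1) + h (2m+1)
      have hr := hrec (2 * (m : ℤ) + 3) (by omega)
      have e1 : (2 * (m : ℤ) + 3 - 1) = 2 * m + 2 := by ring
      rw [e1, keyA] at hr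
      have e2 : (2 * (m : ℤ) + 3 - ((m + 2 : ℕ) : ℤ)) = (m : ℤ) + 1 := by push_cast; ring
      rw [e2] at hr
      have e3 : (2 * (m : ℤ) + 3 - 2) = 2 * m + 1 := by ring
      rw [e3, hb'] at hr
      rw [hr]
      -- h11 split at index m+1 : h11 (2m+4) = h11 (m+2) + h11 (2m+2)
      have h11split : h11 (2 * (m : ℤ) + 4) = h11 ((m : ℤ) + 2) + h11 (2 * (m : ℤ) + 2) := by
        have := (H (m + 1)).2.1
        have d1 : (2 * ((m + 1 : ℕ) : ℤ) + 2) = 2 * (m : ℤ) + 4 := by push_cast; ring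
        have d2 : (((m + 1 : ℕ) : ℤ) + 1) = (m : ℤ) + 2 := by push_cast; ring
        have d3 : (2 * ((m + 1 : ℕ) : ℤ)) = 2 * (m : ℤ) + 2 := by push_cast; ring
        rw [d1, d2, d3] at this
        exact this
      rw [h11split]
      rcases Nat.even_or_odd m with ⟨k, hk⟩ | ⟨k, hk⟩
      · -- m = 2k : m+1 = 2k+1 odd; h (m+1) = h(2k+1) = (b-2) bin (k+1) + h11 (2k+2)
        subst hk
        have ihk := (ih k (by omega)).2
        have e : ((k + k : ℕ) : ℤ) + 1 = 2 * (k : ℤ) + 1 := by push_cast; ring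
        rw [e, ihk]
        -- bin (k+k+2) = bin (k+k+1) + bin (k+1)
        have hbe : bin (k + k + 1 + 1) = bin (k + k + 1) + bin (k + 1) := by
          have := hbine (k + 1) (by omega)
          have e1 : 2 * (k + 1) = k + k + 1 + 1 := by ring
          have e2 : 2 * (k + 1) - 1 = k + k + 1 := by omega
          rw [e2, e1] at this
          exact this
        rw [hbe]
        -- h11 (m+2) = h11 (2k+2)
        have eh : ((k + k : ℕ) : ℤ) + 2 = 2 * ((k : ℕ) : ℤ) + 2 := by push_cast; ring
        rw [eh]
        -- now pure algebra in atoms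
        have e4 : (2 * ((k : ℕ) : ℤ) + 2) = 2 * ((k + k : ℕ) : ℤ) + 2 - (2 * (k:ℤ)) := by
          push_cast; ring
        ring
      · -- m = 2k+1 : m+1 = 2k+2 even; h (m+1) = h(2(k+1)) = k+2
        subst hk
        have ihk := (ih (k + 1) (by omega)).1
        have e : ((2 * k + 1 : ℕ) : ℤ) + 1 = 2 * ((k + 1 : ℕ) : ℤ) := by push_cast; ring
        rw [e, ihk]
        -- bin (2k+3) = bin (2k+2)
        have hbo : bin (2 * k + 1 + 1 + 1) = bin (2 * k + 1 + 1) := by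
          have := hbino (k + 1)
          have e1 : 2 * (k + 1) + 1 = 2 * k + 1 + 1 + 1 := by ring
          have e2 : 2 * (k + 1) = 2 * k + 1 + 1 := by ring
          rw [e1, e2] at this
          exact this
        rw [hbo]
        -- h11 (m+2) = h11 (2(k+1)+1) = k+2
        have eh : ((2 * k + 1 : ℕ) : ℤ) + 2 = 2 * ((k + 1 : ℕ) : ℤ) + 1 := by push_cast; ring
        have h11v := (H (k + 1)).1
        rw [eh, h11v]
        omega

/-- `h_{1,2}(n) = h_{1,1}(n+1)` for all `n ∈ ℕ`, and for every
`b ≥ 2` and `n ∈ ℕ`, `h_{1,b}(2n+1) = (b-2)·bin(n+1) + h_{1,1}(2n+2)`, where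
`bin` is the binary partition function. -/
theorem stmt14 (h11 h12 : ℤ → ℕ)
    (h11init : ∀ n : ℤ, n ≤ 1 → h11 n = 1)
    (h11rec : ∀ n : ℤ, 2 ≤ n → h11 n = h11 (n - (h11 (n - 1) : ℤ)) + h11 (n - 2))
    (h12neg : ∀ n : ℤ, n ≤ 0 → h12 n = 1) (h12one : h12 1 = 2)
    (h12rec : ∀ n : ℤ, 2 ≤ n → h12 n = h12 (n - (h12 (n - 1) : ℤ)) + h12 (n - 2))
    (bin : ℕ → ℕ) (hbin0 : bin 0 = 1)
    (hbine : ∀ n : ℕ, 1 ≤ n → bin (2 * n) = bin (2 * n - 1) + bin n)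
    (hbino : ∀ n : ℕ, bin (2 * n + 1) = bin (2 * n)) :
    (∀ n : ℕ, h12 n = h11 (n + 1)) ∧
    (∀ b : ℕ, 2 ≤ b → ∀ h1b : ℤ → ℕ,
      (∀ n : ℤ, n ≤ 0 → h1b n = 1) → h1b 1 = b →
      (∀ n : ℤ, 2 ≤ n → h1b n = h1b (n - (h1b (n - 1) : ℤ)) + h1b (n - 2)) →
      ∀ n : ℕ, h1b (2 * n + 1) = (b - 2) * bin (n + 1) + h11 (2 * n + 2)) := by
  have H := stmt14_aux1 h11 h11init h11rec
  constructor
  · -- h12 n = h11 (n+1)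
    have H2 := stmt14_aux2 h11 h11init h11rec bin hbin0 hbine hbino 2 le_rfl h12
      h12neg h12one h12rec
    intro n
    rcases Nat.even_or_odd n with ⟨k, hk⟩ | ⟨k, hk⟩
    · subst hk
      have e1 : ((k + k : ℕ) : ℤ) = 2 * (k : ℤ) := by push_cast; ring
      have e2 : ((k + k : ℕ) : ℤ) + 1 = 2 * ((k : ℕ) : ℤ) + 1 := by push_cast; ring
      rw [e2, e1, (H2 k).1, (H k).1]
    · subst hk
      have e1 : ((2 * k + 1 : ℕ) : ℤ) = 2 * ((k : ℕ) : ℤ) + 1 := by push_cast; ring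
      have e2 : ((2 * k + 1 : ℕ) : ℤ) + 1 = 2 * ((k : ℕ) : ℤ) + 2 := by push_cast; ring
      rw [e2, e1, (H2 k).2]
      simp
  · intro b hb h1b hneg hone hrec n
    exact (stmt14_aux2 h11 h11init h11rec bin hbin0 hbine hbino b hb h1b hneg hone hrec n).2
end

section
/- Let a ≥ 2 and b ≥ 2 be integers and let h_{a,b} be as defined. Then for all n ∈ ℕ, h_{a,b}(2n) = (n+1)a and h_{a,b}(2n+1) = na + b. -/
/-- For `a ≥ 2`, `b ≥ 2` and the sequence `h = h_{a,b}` we have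
`h (2n) = (n+1)·a` and `h (2n+1) = n·a + b` for all `n ∈ ℕ`. -/
theorem stmt15 (a b : ℕ) (ha : 2 ≤ a) (hb : 2 ≤ b) (h : ℤ → ℕ)
    (hneg : ∀ n : ℤ, n ≤ 0 → h n = a) (hone : h 1 = b)
    (hrec : ∀ n : ℤ, 2 ≤ n → h n = h (n - (h (n - 1) : ℤ)) + h (n - 2)) :
    ∀ n : ℕ, h (2 * n) = (n + 1) * a ∧ h (2 * n + 1) = n * a + b := by
  intro n
  induction n with
  | zero =>
    constructor
    · simpa using hneg 0 le_rfl
    · simpa using hone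
  | succ n ih =>
    obtain ⟨ih0, ih1⟩ := ih
    have hn : (0:ℤ) ≤ (n:ℤ) := Int.natCast_nonneg n
    have key1 : h (2 * ((n:ℤ) + 1)) = (n + 2) * a := by
      have hr := hrec (2 * ((n:ℤ) + 1)) (by linarith)
      have e1 : 2 * ((n:ℤ) + 1) - 1 = 2 * (n:ℤ) + 1 := by ring
      have e2 : 2 * ((n:ℤ) + 1) - 2 = 2 * (n:ℤ) := by ring
      rw [e1, e2] at hr
      have ih1' : h (2 * (n:ℤ) + 1) = n * a + b := by exact_mod_cast ih1
      have ih0' : h (2 * (n:ℤ)) = (n + 1) * a := by exact_mod_cast ih0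
      rw [ih1', ih0'] at hr
      have hle : 2 * ((n:ℤ) + 1) - ((n * a + b : ℕ) : ℤ) ≤ 0 := by
        have : (2 * n + 2 : ℕ) ≤ n * a + b := by nlinarith
        have := (Nat.cast_le (α := ℤ)).mpr this
        push_cast at this ⊢
        linarith
      rw [hneg _ hle] at hr
      rw [hr]; ring
    have key2 : h (2 * ((n:ℤ) + 1) + 1) = (n + 1) * a + b := by
      have hr := hrec (2 * ((n:ℤ) + 1) + 1) (by linarith)
      have e1 : 2 * ((n:ℤ) + 1) + 1 - 1 = 2 * ((n:ℤ) + 1) := by ring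
      have e2 : 2 * ((n:ℤ) + 1) + 1 - 2 = 2 * (n:ℤ) + 1 := by ring
      rw [e1, e2] at hr
      have ih1' : h (2 * (n:ℤ) + 1) = n * a + b := by exact_mod_cast ih1
      rw [key1, ih1'] at hr
      have hle : 2 * ((n:ℤ) + 1) + 1 - (((n + 2) * a : ℕ) : ℤ) ≤ 0 := by
        have : (2 * n + 3 : ℕ) ≤ (n + 2) * a := by nlinarith
        have := (Nat.cast_le (α := ℤ)).mpr this
        push_cast at this ⊢
        linarith
      rw [hneg _ hle] at hr
      rw [hr]; ring
    constructor
    · have : h (2 * ((n:ℤ) + 1)) = ((n + 1 : ℕ) + 1) * a := by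
        rw [key1]
      exact_mod_cast this
    · have : h (2 * ((n:ℤ) + 1) + 1) = (n + 1 : ℕ) * a + b := by
        rw [key2]
      exact_mod_cast this
end

section
/- Let a ≥ 3 be an integer and let h_{a,1} be as defined. Then h_{a,1}(0) = a, and for all positive integers n, h_{a,1}(n) = ⌊n/2⌋ · a + 1. -/
/-! Once `n ≥ 3`, the previous value `h (n - 1) = ⌊(n-1)/2⌋·a + 1` already exceeds `n`, so the
recursion looks back to a non-positive index and `h n = a + h (n - 2)`: the sequence grows by `a`
every two steps starting from `h 1 = 1` and `h 2 = a + 1`. -/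

lemma le_div_two_mul {a n : ℕ} (ha : 3 ≤ a) (hn : 2 ≤ n) : n ≤ n / 2 * a :=
  calc n ≤ n / 2 * 3 := by omega
    _ ≤ n / 2 * a := Nat.mul_le_mul_left _ ha

section MetaFibonacci

variable {a : ℕ} {h : ℤ → ℕ} (hneg : ∀ n : ℤ, n ≤ 0 → h n = a)
  (hrec : ∀ n : ℤ, 2 ≤ n → h n = h (n - (h (n - 1) : ℤ)) + h (n - 2))
include hneg hrec

lemma eq_add_of_le_prev {n : ℤ} (hn : 2 ≤ n) (hle : n ≤ h (n - 1)) : h n = a + h (n - 2) := by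
  rw [hrec n hn, hneg _ (by omega)]

lemma eq_div_two_mul_add_one (ha : 3 ≤ a) (hone : h 1 = 1) :
    ∀ k : ℕ, h (k + 1 : ℕ) = (k + 1) / 2 * a + 1 ∧ h (k + 2 : ℕ) = (k + 2) / 2 * a + 1
  | 0 => by
    have h2 : h 2 = a + 1 := by
      rw [hrec 2 le_rfl, show (2 : ℤ) - 1 = 1 by norm_num, hone]
      norm_num [hone, hneg 0 le_rfl, add_comm]
    exact ⟨by simpa using hone, by simpa using h2⟩
  | k + 1 => by
    obtain ⟨ih₁, ih₂⟩ := eq_div_two_mul_add_one ha hone k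
    refine ⟨ih₂, ?_⟩
    have hle : ((k + 3 : ℕ) : ℤ) ≤ h ((k + 3 : ℕ) - 1) := by
      rw [show ((k + 3 : ℕ) : ℤ) - 1 = (k + 2 : ℕ) by push_cast; ring, ih₂]
      have := le_div_two_mul (n := k + 2) ha (by omega)
      omega
    rw [eq_add_of_le_prev hneg hrec (by omega) hle,
      show ((k + 3 : ℕ) : ℤ) - 2 = (k + 1 : ℕ) by push_cast; ring, ih₁]
    have : (k + 3) / 2 = (k + 1) / 2 + 1 := by omega
    rw [this]; ring

end MetaFibonacci

/-- For `a ≥ 3` and the sequence `h = h_{a,1}` we have `h 0 = a` and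
`h n = ⌊n/2⌋·a + 1` for every positive integer `n`. -/
theorem stmt16 (a : ℕ) (ha : 3 ≤ a) (h : ℤ → ℕ)
    (hneg : ∀ n : ℤ, n ≤ 0 → h n = a) (hone : h 1 = 1)
    (hrec : ∀ n : ℤ, 2 ≤ n → h n = h (n - (h (n - 1) : ℤ)) + h (n - 2)) :
    h 0 = a ∧ ∀ n : ℕ, 1 ≤ n → h n = n / 2 * a + 1 := by
  refine ⟨hneg 0 le_rfl, fun n hn => ?_⟩
  obtain ⟨k, rfl⟩ := Nat.exists_eq_add_of_le' hn
  exact (eq_div_two_mul_add_one hneg hrec ha hone k).1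
end

section
/- Let h_{2,1} be as defined. Then h_{2,1}(0) = 2, h_{2,1}(1) = 1, h_{2,1}(2) = h_{2,1}(3) = 3, and for all integers n ≥ 2, h_{2,1}(2n) = 3n - 2 and h_{2,1}(2n+1) = 2n. -/
/-!
Past the initial terms, `h_{2,1}(2n + 1) = 2n` sends the recurrence at `2n + 2` back to
`h(2) = 3`, giving the jump `h(2n + 2) = h(2n) + 3`, while `h(2n + 2) = 3n + 1` is at least
`2n + 3` for `n ≥ 2`, so the recurrence at `2n + 3` reaches the constant initial part
`h = 2` and gives `h(2n + 3) = h(2n + 1) + 2`.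
-/

structure IsMetaFib_s17 (a b : ℕ) (h : ℤ → ℕ) : Prop where
  apply_of_nonpos : ∀ n : ℤ, n ≤ 0 → h n = a
  apply_one : h 1 = b
  apply_of_two_le : ∀ n : ℤ, 2 ≤ n → h n = h (n - h (n - 1)) + h (n - 2)

namespace IsMetaFib_s17

variable {a b : ℕ} {h : ℤ → ℕ}

theorem apply_eq_add (hh : IsMetaFib_s17 a b h) {n m : ℤ} {k : ℕ} (hn : 2 ≤ n)
    (hk : h (n - 1) = k) (hm : n - k = m) : h n = h m + h (n - 2) := by
  rw [hh.apply_of_two_le n hn, hk, hm]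

theorem apply_zero (hh : IsMetaFib_s17 a b h) : h 0 = a :=
  hh.apply_of_nonpos 0 le_rfl

variable (hh : IsMetaFib_s17 2 1 h)
include hh

theorem apply_two : h 2 = 3 := by
  rw [hh.apply_eq_add (m := 1) le_rfl hh.apply_one (by norm_num), hh.apply_one]
  norm_num [hh.apply_zero]

theorem apply_three : h 3 = 3 := by
  rw [hh.apply_eq_add (m := 0) (k := 3) (by norm_num)
      (by norm_num [hh.apply_two]) (by norm_num),
    hh.apply_zero]
  norm_num [hh.apply_one]

theorem apply_four : h 4 = 4 := by
  rw [hh.apply_eq_add (m := 1) (k := 3) (by norm_num)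
      (by norm_num [hh.apply_three]) (by norm_num),
    hh.apply_one]
  norm_num [hh.apply_two]

theorem apply_five : h 5 = 4 := by
  rw [hh.apply_eq_add (m := 1) (k := 4) (by norm_num)
      (by norm_num [hh.apply_four]) (by norm_num),
    hh.apply_one]
  norm_num [hh.apply_three]

theorem apply_two_mul_add_four (k : ℕ) :
    h (2 * k + 4) = 3 * k + 4 ∧ h (2 * k + 5) = 2 * k + 4 := by
  induction k with
  | zero => simpa using ⟨hh.apply_four, hh.apply_five⟩
  | succ k ih =>
    obtain ⟨h_even, h_odd⟩ := ih
    have h_even' : h (2 * (k + 1 : ℕ) + 4) = 3 * (k + 1) + 4 := by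
      rw [hh.apply_eq_add (m := 2) (k := 2 * k + 4) (by omega)
          (by rw [← h_odd]; push_cast; ring_nf) (by push_cast; ring),
        hh.apply_two, show (2 * (k + 1 : ℕ) + 4 : ℤ) - 2 = 2 * k + 4 by push_cast; ring, h_even]
      ring
    refine ⟨h_even', ?_⟩
    rw [hh.apply_eq_add (m := -k) (k := 3 * (k + 1) + 4) (by omega)
        (by rw [← h_even']; push_cast; ring_nf) (by push_cast; ring),
      hh.apply_of_nonpos _ (by omega),
      show (2 * (k + 1 : ℕ) + 5 : ℤ) - 2 = 2 * k + 5 by push_cast; ring, h_odd]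
    ring

end IsMetaFib_s17

/-- For the sequence `h = h_{2,1}` we have `h 0 = 2`, `h 1 = 1`,
`h 2 = h 3 = 3`, and for all `n ≥ 2`, `h (2n) = 3n - 2` and `h (2n+1) = 2n`. -/
theorem stmt17 (h : ℤ → ℕ)
    (hneg : ∀ n : ℤ, n ≤ 0 → h n = 2) (hone : h 1 = 1)
    (hrec : ∀ n : ℤ, 2 ≤ n → h n = h (n - (h (n - 1) : ℤ)) + h (n - 2)) :
    h 0 = 2 ∧ h 1 = 1 ∧ h 2 = 3 ∧ h 3 = 3 ∧
    ∀ n : ℕ, 2 ≤ n → h (2 * n) = 3 * n - 2 ∧ h (2 * n + 1) = 2 * n := by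
  have hh : IsMetaFib_s17 2 1 h := ⟨hneg, hone, hrec⟩
  refine ⟨hh.apply_zero, hone, hh.apply_two, hh.apply_three, fun n hn => ?_⟩
  obtain ⟨k, rfl⟩ := Nat.exists_eq_add_of_le' hn
  obtain ⟨h_even, h_odd⟩ := hh.apply_two_mul_add_four k
  push_cast
  constructor
  · rw [show 2 * ((k : ℤ) + 2) = 2 * k + 4 by ring, h_even]
    omega
  · rw [show 2 * ((k : ℤ) + 2) + 1 = 2 * k + 5 by ring, h_odd]
    ring
end

section
/- Let a, b be positive integers with either a = b ≥ 2 both even, or a > b ≥ 2, and let g_{a,b} be as defined. Then for all n ∈ ℕ: g_{a,b}(2n+1) = b and g_{a,b}(2n+2) = g_{a,b}(2n+2-b) + g_{a,b}(2n). In particular, g_{a,b}(2n) = a for n < ⌊b/2⌋; if b is odd then g_{a,b}(2n) = a + (n - ⌊b/2⌋)·b for all n ≥ ⌊b/2⌋; and if b = 2 then g_{a,b}(2n) = 2^n · a for all n. -/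
/-- For positive integers `a, b` with either `a = b ≥ 2` even, or
`a > b ≥ 2`, and the sequence `g = g_{a,b}`: for all `n ∈ ℕ`, `g (2n+1) = b` and
`g (2n+2) = g (2n+2-b) + g (2n)`; in particular `g (2n) = a` for `n < ⌊b/2⌋`,
`g (2n) = a + (n - ⌊b/2⌋)·b` for `n ≥ ⌊b/2⌋` when `b` is odd, and
`g (2n) = 2ⁿ·a` when `b = 2`. -/
theorem stmt18 (a b : ℕ) (ha : 0 < a) (hb : 0 < b)
    (hab : (a = b ∧ 2 ≤ a ∧ Even a) ∨ (b < a ∧ 2 ≤ b)) (g : ℤ → ℕ)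
    (hneg : ∀ n : ℤ, n < 0 → g n = 0) (hzero : g 0 = a) (hone : g 1 = b)
    (hrec : ∀ n : ℤ, 2 ≤ n → g n = g (n - (g (n - 1) : ℤ)) + g (n - 2)) :
    (∀ n : ℕ, g (2 * n + 1) = b) ∧
    (∀ n : ℕ, g (2 * n + 2) = g (2 * (n : ℤ) + 2 - b) + g (2 * n)) ∧
    (∀ n : ℕ, n < b / 2 → g (2 * n) = a) ∧
    (Odd b → ∀ n : ℕ, b / 2 ≤ n → g (2 * n) = a + (n - b / 2) * b) ∧
    (b = 2 → ∀ n : ℕ, g (2 * n) = 2 ^ n * a) := by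
  have ha2 : 2 ≤ a := by rcases hab with ⟨h1, h2, _⟩ | ⟨h1, h2⟩ <;> omega
  have hb2 : 2 ≤ b := by rcases hab with ⟨h1, h2, _⟩ | ⟨h1, h2⟩ <;> omega
  -- key joint induction
  have key : ∀ n : ℕ, g (2 * (n : ℤ) + 1) = b ∧ a ≤ g (2 * (n : ℤ)) ∧
      (1 ≤ n → 2 * n + 2 ≤ g (2 * (n : ℤ))) := by
    intro n
    induction n using Nat.strong_induction_on with
    | _ n ih =>
      match n with
      | 0 =>
        refine ⟨by simpa using hone, by simpa using hzero.ge, by omega⟩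
      | (k+1) =>
        -- the even recurrence at 2k+2
        have ihk := ih k (by omega)
        have heven : g (2 * (k : ℤ) + 2) = g (2 * (k : ℤ) + 2 - b) + g (2 * (k : ℤ)) := by
          have h := hrec (2 * (k : ℤ) + 2) (by omega)
          have e1 : (2 * (k : ℤ) + 2) - 1 = 2 * (k : ℤ) + 1 := by ring
          have e2 : (2 * (k : ℤ) + 2) - 2 = 2 * (k : ℤ) := by ring
          rw [e1, e2, ihk.1] at h
          exact h
        -- lower bound for the first term when the argument is nonneg
        have hterm : 2 * (k : ℤ) + 2 - b < 0 ∨ 2 ≤ g (2 * (k : ℤ) + 2 - b) := by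
          by_cases hc : 2 * (k : ℤ) + 2 - b < 0
          · exact Or.inl hc
          · right
            push_neg at hc
            rcases Nat.even_or_odd b with ⟨m, hm⟩ | ⟨m, hm⟩
            · -- b = 2m, argument = 2*(k+1-m)
              have hm1 : 1 ≤ m := by omega
              have hkm : m ≤ k + 1 := by omega
              set j : ℕ := k + 1 - m with hj
              have harg : 2 * (k : ℤ) + 2 - b = 2 * (j : ℤ) := by
                push_cast [hj]; push_cast [Nat.cast_sub hkm]; omega
              rw [harg]
              exact le_trans ha2 (ih j (by omega)).2.1
            · -- b = 2m+1, argument = 2*(k-m)+1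
              have hkm : m ≤ k := by omega
              set j : ℕ := k - m with hj
              have harg : 2 * (k : ℤ) + 2 - b = 2 * (j : ℤ) + 1 := by
                push_cast [hj]; push_cast [Nat.cast_sub hkm]; omega
              rw [harg, (ih j (by omega)).1]
              exact hb2
        -- lower bounds for g(2k+2)
        have hge : 2 * (k + 1) + 2 ≤ g (2 * (k : ℤ) + 2) := by
          rcases hterm with hc | hc
          · -- g(2k+2) = g(2k), and 2k+3 ≤ b
            rw [hneg _ hc] at heven
            have hbk : 2 * k + 3 ≤ b := by omega
            have hak : 2 * k + 4 ≤ a := by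
              rcases hab with ⟨h1, h2, r, hr⟩ | ⟨h1, h2⟩ <;> omega
            have := ihk.2.1
            omega
          · -- g(2k+2) ≥ 2 + g(2k)
            rcases Nat.eq_zero_or_pos k with hk0 | hk1
            · subst hk0
              have := ihk.2.1
              omega
            · have := ihk.2.2 hk1
              omega
        have hga : a ≤ g (2 * (k : ℤ) + 2) := by
          have := ihk.2.1; omega
        -- odd value at 2k+3
        have hodd : g (2 * (k : ℤ) + 3) = b := by
          have h := hrec (2 * (k : ℤ) + 3) (by omega)
          have e1 : (2 * (k : ℤ) + 3) - 1 = 2 * (k : ℤ) + 2 := by ring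
          have e2 : (2 * (k : ℤ) + 3) - 2 = 2 * (k : ℤ) + 1 := by ring
          rw [e1, e2, ihk.1] at h
          have hlt : 2 * (k : ℤ) + 3 - (g (2 * (k : ℤ) + 2) : ℤ) < 0 := by
            have := hge; push_cast; omega
          rw [hneg _ hlt] at h
          simpa using h
        have ec1 : 2 * ((k : ℤ) + 1) + 1 = 2 * (k : ℤ) + 3 := by ring
        have ec2 : 2 * ((k : ℤ) + 1) = 2 * (k : ℤ) + 2 := by ring
        refine ⟨?_, ?_, ?_⟩
        · push_cast; rw [ec1]; exact hodd
        · push_cast; rw [ec2]; exact hga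
        · intro _; push_cast; rw [ec2]; push_cast at hge ⊢; omega
  -- part 1
  have part1 : ∀ n : ℕ, g (2 * n + 1) = b := fun n => (key n).1
  -- part 2
  have part2 : ∀ n : ℕ, g (2 * n + 2) = g (2 * (n : ℤ) + 2 - b) + g (2 * n) := by
    intro n
    have h := hrec (2 * (n : ℤ) + 2) (by omega)
    have e1 : (2 * (n : ℤ) + 2) - 1 = 2 * (n : ℤ) + 1 := by ring
    have e2 : (2 * (n : ℤ) + 2) - 2 = 2 * (n : ℤ) := by ring
    rw [e1, e2, part1 n] at h
    exact h
  -- part 3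
  have part3 : ∀ n : ℕ, n < b / 2 → g (2 * n) = a := by
    intro n
    induction n with
    | zero => intro _; simpa using hzero
    | succ k ihk =>
      intro hk
      have h := part2 k
      have hc : 2 * (k : ℤ) + 2 - b < 0 := by push_cast; omega
      rw [hneg _ hc, ihk (by omega)] at h
      have ec : 2 * ((k : ℤ) + 1) = 2 * (k : ℤ) + 2 := by ring
      push_cast
      rw [ec]
      simpa using h
  -- part 4
  have part4 : Odd b → ∀ n : ℕ, b / 2 ≤ n → g (2 * n) = a + (n - b / 2) * b := by
    intro hob
    obtain ⟨m, hm⟩ := hob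
    have hm1 : 1 ≤ m := by omega
    have hbm : b / 2 = m := by omega
    -- g(2m) = a
    have hgm : g (2 * (m : ℤ)) = a := by
      have h := part2 (m - 1)
      have hc : 2 * ((m - 1 : ℕ) : ℤ) + 2 - b < 0 := by
        push_cast [Nat.cast_sub hm1]; omega
      rw [hneg _ hc] at h
      have h3 : g (2 * ((m - 1 : ℕ) : ℤ)) = a := part3 (m - 1) (by omega)
      rw [h3] at h
      have ec : 2 * (((m - 1 : ℕ) : ℤ)) + 2 = 2 * (m : ℤ) := by
        push_cast [Nat.cast_sub hm1]; ring
      rw [ec] at h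
      simpa using h
    have step : ∀ k : ℕ, g (2 * ((m + k : ℕ) : ℤ)) = a + k * b := by
      intro k
      induction k with
      | zero => simpa using hgm
      | succ j ihj =>
        have h := part2 (m + j)
        have harg : 2 * ((m + j : ℕ) : ℤ) + 2 - b = 2 * (j : ℤ) + 1 := by
          push_cast; omega
        rw [harg, part1 j, ihj] at h
        have ec : 2 * ((m + (j + 1) : ℕ) : ℤ) = 2 * ((m + j : ℕ) : ℤ) + 2 := by
          push_cast; ring
        rw [ec, h]
        ring
    intro n hn
    have hn' : n = m + (n - m) := by omega
    rw [hbm]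
    calc g (2 * (n : ℤ)) = g (2 * ((m + (n - m) : ℕ) : ℤ)) := by rw [← hn']
      _ = a + (n - m) * b := step (n - m)
  -- part 5
  have part5 : b = 2 → ∀ n : ℕ, g (2 * n) = 2 ^ n * a := by
    intro hb2' n
    induction n with
    | zero => simpa using hzero
    | succ k ihk =>
      have h := part2 k
      have harg : 2 * (k : ℤ) + 2 - b = 2 * (k : ℤ) := by rw [hb2']; push_cast; ring
      rw [harg, ihk] at h
      have ec : 2 * ((k : ℤ) + 1) = 2 * (k : ℤ) + 2 := by ring
      push_cast
      rw [ec, h]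
      ring
  exact ⟨part1, part2, part3, part4, part5⟩
end

section
/- Let a, b be positive integers with either b = a ≥ 3 both odd, or b > a ≥ 2, and let g_{a,b} be as defined. Then for all n ∈ ℕ: g_{a,b}(2n) = a and g_{a,b}(2n+3) = g_{a,b}(2n+3-a) + g_{a,b}(2n+1). In particular, g_{a,b}(2n+1) = b for n < ⌊a/2⌋; if a is odd then g_{a,b}(2n+1) = b + (n + 1 - ⌊a/2⌋)·a for all n ≥ ⌊a/2⌋; and if a = 2 then g_{a,b}(2n+1) = 2^n · b for all n. -/
/-- For positive integers `a, b` with either `b = a ≥ 3` odd, or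
`b > a ≥ 2`, and the sequence `g = g_{a,b}`: for all `n ∈ ℕ`, `g (2n) = a` and
`g (2n+3) = g (2n+3-a) + g (2n+1)`; in particular `g (2n+1) = b` for `n < ⌊a/2⌋`,
`g (2n+1) = b + (n + 1 - ⌊a/2⌋)·a` for `n ≥ ⌊a/2⌋` when `a` is odd, and
`g (2n+1) = 2ⁿ·b` when `a = 2`. -/
theorem stmt19 (a b : ℕ) (ha : 0 < a) (hb : 0 < b)
    (hab : (b = a ∧ 3 ≤ a ∧ Odd a) ∨ (a < b ∧ 2 ≤ a)) (g : ℤ → ℕ)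
    (hneg : ∀ n : ℤ, n < 0 → g n = 0) (hzero : g 0 = a) (hone : g 1 = b)
    (hrec : ∀ n : ℤ, 2 ≤ n → g n = g (n - (g (n - 1) : ℤ)) + g (n - 2)) :
    (∀ n : ℕ, g (2 * n) = a) ∧
    (∀ n : ℕ, g (2 * (n : ℤ) + 3) = g (2 * (n : ℤ) + 3 - a) + g (2 * n + 1)) ∧
    (∀ n : ℕ, n < a / 2 → g (2 * n + 1) = b) ∧
    (Odd a → ∀ n : ℕ, a / 2 ≤ n → g (2 * n + 1) = b + (n + 1 - a / 2) * a) ∧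
    (a = 2 → ∀ n : ℕ, g (2 * n + 1) = 2 ^ n * b) := by
  have ha2 : 2 ≤ a := by rcases hab with ⟨_, h, _⟩ | ⟨_, h⟩ <;> omega
  have hb3 : 3 ≤ b := by rcases hab with ⟨hba, h3, _⟩ | ⟨hlt, h2⟩ <;> omega
  have key : ∀ n : ℕ, g (2 * (n:ℤ)) = a ∧ 2*n+3 ≤ g (2*(n:ℤ)+1) ∧
      (2*n+1 < a → g (2*(n:ℤ)+1) = b) := by
    intro n
    induction n using Nat.strong_induction_on with
    | _ n IH =>
      rcases n with _ | k
      · refine ⟨by simpa using hzero, ?_, fun _ => by simpa using hone⟩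
        have e : 2*((0:ℕ):ℤ)+1 = 1 := by norm_num
        rw [e, hone]; omega
      · obtain ⟨hek, hok, hbk⟩ := IH k (Nat.lt_succ_self k)
        have ecast : ((k+1:ℕ):ℤ) = (k:ℤ)+1 := by push_cast; ring
        have heven : g (2 * ((k+1:ℕ):ℤ)) = a := by
          have hr := hrec (2*(k:ℤ)+2) (by omega)
          have h1 : (2*(k:ℤ)+2) - 1 = 2*(k:ℤ)+1 := by ring
          have h2 : (2*(k:ℤ)+2) - 2 = 2*(k:ℤ) := by ring
          rw [h1, h2] at hr
          have hneg1 : g (2*(k:ℤ)+2 - (g (2*(k:ℤ)+1) : ℤ)) = 0 := by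
            apply hneg
            have : (2*k+3 : ℤ) ≤ (g (2*(k:ℤ)+1) : ℤ) := by exact_mod_cast hok
            omega
          have e : 2 * (((k+1:ℕ)):ℤ) = 2*(k:ℤ)+2 := by rw [ecast]; ring
          rw [e, hr, hneg1, hek]; omega
        have hr := hrec (2*(k:ℤ)+3) (by omega)
        have h1 : (2*(k:ℤ)+3) - 1 = 2 * ((k+1:ℕ):ℤ) := by rw [ecast]; ring
        have h2 : (2*(k:ℤ)+3) - 2 = 2*(k:ℤ)+1 := by ring
        rw [h1, h2, heven] at hr
        have eodd : 2*((k+1:ℕ):ℤ)+1 = 2*(k:ℤ)+3 := by rw [ecast]; ring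
        by_cases hca : 2*k+3 < a
        · have hz : g (2*(k:ℤ)+3 - (a:ℤ)) = 0 := hneg _ (by omega)
          have hb' : g (2*(k:ℤ)+1) = b := hbk (by omega)
          have hg : g (2*(k:ℤ)+3) = b := by rw [hr, hz, hb']; omega
          refine ⟨heven, ?_, fun _ => by rw [eodd, hg]⟩
          have hbig : 2*(k+1)+3 ≤ b := by
            rcases hab with ⟨hba, h3, t, ht⟩ | ⟨hlt, h2'⟩ <;> omega
          rw [eodd, hg]; exact hbig
        · have hdc : (2*(k:ℤ)+3 - (a:ℤ)) = ((2*k+3-a : ℕ):ℤ) := by omega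
          rw [hdc] at hr
          have hge : 2 ≤ g ((2*k+3-a:ℕ):ℤ) := by
            rcases Nat.even_or_odd (2*k+3-a) with ⟨m, hm⟩ | ⟨m, hm⟩
            · have hmk : m < k+1 := by omega
              have h := (IH m hmk).1
              have e : ((2*k+3-a:ℕ):ℤ) = 2*(m:ℤ) := by omega
              rw [e, h]; omega
            · have hmk : m < k+1 := by omega
              have h := (IH m hmk).2.1
              have e : ((2*k+3-a:ℕ):ℤ) = 2*(m:ℤ)+1 := by omega
              rw [e]; omega
          refine ⟨heven, ?_, fun h => by omega⟩
          rw [eodd, hr]; omega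
  have hev : ∀ n : ℕ, g (2 * (n:ℤ)) = a := fun n => (key n).1
  have hstep : ∀ n : ℕ, g (2*(n:ℤ)+3) = g (2*(n:ℤ)+3 - a) + g (2*(n:ℤ)+1) := by
    intro n
    have hr := hrec (2*(n:ℤ)+3) (by omega)
    have he : g ((2*(n:ℤ)+3) - 1) = a := by
      have h := hev (n+1)
      have e : (2*(n:ℤ)+3) - 1 = 2 * ((n+1:ℕ):ℤ) := by push_cast; ring
      rw [e]; exact h
    have h2 : (2*(n:ℤ)+3) - 2 = 2*(n:ℤ)+1 := by ring
    rw [he, h2] at hr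
    exact hr
  refine ⟨hev, hstep, ?_, ?_, ?_⟩
  · intro n hn
    exact (key n).2.2 (by omega)
  · intro hodd n hn
    obtain ⟨t, ht⟩ := hodd
    have ht1 : 1 ≤ t := by omega
    have hat : a / 2 = t := by omega
    induction n, hn using Nat.le_induction with
    | base =>
      have hs := hstep (t-1)
      have e2 : 2*((t-1:ℕ):ℤ)+3 - (a:ℤ) = 0 := by omega
      have e3 : g (2*((t-1:ℕ):ℤ)+1) = b := (key (t-1)).2.2 (by omega)
      have e1 : 2*((t-1:ℕ):ℤ)+3 = 2*((a/2 : ℕ):ℤ)+1 := by omega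
      rw [e2, hzero, e3, e1] at hs
      rw [hs]
      have : a/2+1-a/2 = 1 := by omega
      rw [this, one_mul]; omega
    | succ n hn IH =>
      have hs := hstep n
      have e : 2*(n:ℤ)+3 - (a:ℤ) = 2 * ((n+1-t : ℕ):ℤ) := by omega
      rw [e, hev (n+1-t)] at hs
      have e' : 2*((n+1:ℕ):ℤ)+1 = 2*(n:ℤ)+3 := by push_cast; ring
      rw [e', hs, IH]
      have h1 : n+1+1 - a/2 = (n+1-a/2)+1 := by omega
      rw [h1, add_mul, one_mul]; ring
  · intro ha2' n
    subst ha2'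
    induction n with
    | zero =>
      have e : 2*((0:ℕ):ℤ)+1 = 1 := by norm_num
      rw [e, hone]; ring
    | succ k IH =>
      have hs := hstep k
      have e : 2*(k:ℤ)+3 - ((2:ℕ):ℤ) = 2*(k:ℤ)+1 := by push_cast; ring
      rw [e] at hs
      have e' : 2*((k+1:ℕ):ℤ)+1 = 2*(k:ℤ)+3 := by push_cast; ring
      rw [e', hs, IH]
      ring
end
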